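/- arXiv:1605.01207 — 6 statements merged into one kernel-verified Lean document; each statement's English description precedes it below -/
import Mathlib

section
/- In a hypergraph of degree at most 2 (every vertex belongs to at most two hyperedges), for every valuation of vertex labels, there exists an independent set of hyperedges covering all vertices labelled 0 if and only if the corresponding 2-CNF formula (with a variable per hyperedge, clauses ¬u_i ∨ ¬u_j for intersecting hyperedges e_i, e_j, and clauses u_i ∨ u_j whenever e_i and e_j share a vertex labelled 0) is satisfiable. -/
/-- In a hypergraph of degree at most 2 (every vertex belongs to at most two
hyperedges), for every valuation of vertex labels, there exists an independent set of
hyperedges covering all vertices labelled 0 if and only if the corresponding 2-CNF formula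
(with a variable per hyperedge, clauses `¬uᵢ ∨ ¬uⱼ` for intersecting hyperedges `eᵢ, eⱼ`, and
clauses `uᵢ ∨ uⱼ` whenever `eᵢ` and `eⱼ` share a vertex labelled 0) is satisfiable. -/
theorem stmt_0 {V ι : Type*} (e : ι → Set V) (lab : V → Bool)
    (hdeg : ∀ v : V, ∀ i j k : ι, v ∈ e i → v ∈ e j → v ∈ e k → i = j ∨ i = k ∨ j = k) :
    (∃ S : Set ι, (S.Pairwise fun i j => Disjoint (e i) (e j)) ∧
        ∀ v : V, lab v = false → ∃ i ∈ S, v ∈ e i) ↔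
    (∃ u : ι → Bool,
        (∀ i j : ι, i ≠ j → (e i ∩ e j).Nonempty → ¬(u i = true ∧ u j = true)) ∧
        (∀ v : V, lab v = false →
          ∃ i j : ι, v ∈ e i ∧ v ∈ e j ∧ (u i = true ∨ u j = true))) := by
  classical
  constructor
  · rintro ⟨S, hpw, hcov⟩
    refine ⟨fun i => if i ∈ S then true else false, ?_, ?_⟩
    · rintro i j hij ⟨v, hvi, hvj⟩ ⟨hi, hj⟩
      have hi' : i ∈ S := by by_contra h; simp [h] at hi
      have hj' : j ∈ S := by by_contra h; simp [h] at hj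
      exact (hpw hi' hj' hij).le_bot ⟨hvi, hvj⟩
    · intro v hv
      obtain ⟨i, hiS, hvi⟩ := hcov v hv
      exact ⟨i, i, hvi, hvi, Or.inl (by simp [hiS])⟩
  · rintro ⟨u, hcl, hcov⟩
    refine ⟨{i | u i = true}, ?_, ?_⟩
    · intro i hi j hj hij
      rw [Set.disjoint_left]
      intro v hvi hvj
      exact hcl i j hij ⟨v, hvi, hvj⟩ ⟨hi, hj⟩
    · intro v hv
      obtain ⟨i, j, hvi, hvj, hu⟩ := hcov v hv
      rcases hu with h | h
      · exact ⟨i, h, hvi⟩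
      · exact ⟨j, h, hvj⟩
end

section
/- For every generalised hypergraph program P over n propositional variables, there exists an (ordinary) hypergraph program P' computing the same Boolean function with |P'| ≤ n · |P|. -/
/-!
A satisfiable conjunction of literals over `n` variables is equivalent to one with a single
conjunct per variable, and an unsatisfiable one to `n` copies of the constant 0. So each vertex
`v` of a generalised program can be split into `n` vertices `(v, i)` carrying one label each, and
each hyperedge `e` replaced by `e × {1, …, n}`. This lifting preserves and reflects disjointness,
and `v` has to be covered exactly when one of its copies has to be, so independent covers
correspond; the size grows by a factor of at most `n`.
-/

/-- A vertex label: a constant 0/1 or a literal over variables `p₁, …, pₙ`. -/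
inductive HLabel (n : ℕ) where
  | const : Bool → HLabel n
  | lit : Fin n → Bool → HLabel n

/-- Evaluation of a label under an input. -/
def HLabel.eval {n : ℕ} (α : Fin n → Bool) : HLabel n → Bool
  | .const b => b
  | .lit i pol => α i == pol

/-- A generalised hypergraph program over `n` variables: vertices are labelled with
(conjunctions of) labels; an ordinary HGP has at most one label per vertex. -/
structure GenHGP (n : ℕ) where
  nv : ℕ
  label : Fin nv → List (HLabel n)
  edges : Finset (Finset (Fin nv))

/-- Evaluation of the (conjunctive) label of a vertex. -/
def GenHGP.evalLabel {n : ℕ} (P : GenHGP n) (α : Fin n → Bool) (v : Fin P.nv) : Bool :=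
  (P.label v).all (HLabel.eval α)

/-- The output of a hypergraph program: 1 iff there is an independent set of hyperedges
containing every vertex whose label evaluates to 0. -/
def GenHGP.output {n : ℕ} (P : GenHGP n) (α : Fin n → Bool) : Prop :=
  ∃ S ⊆ P.edges, ((S : Set (Finset (Fin P.nv))).Pairwise fun e f => Disjoint e f) ∧
    ∀ v : Fin P.nv, P.evalLabel α v = false → ∃ e ∈ S, v ∈ e

/-- The size of a hypergraph program: number of vertices plus number of hyperedges. -/
def GenHGP.size {n : ℕ} (P : GenHGP n) : ℕ := P.nv + P.edges.card

/-- An ordinary HGP: every vertex is labelled by 0, 1 or a single literal. -/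
def GenHGP.IsOrdinary {n : ℕ} (P : GenHGP n) : Prop := ∀ v, (P.label v).length ≤ 1

namespace HLabel

theorem eval_lit_eq_true {n : ℕ} {α : Fin n → Bool} {i : Fin n} {b : Bool} :
    (lit i b).eval α = true ↔ α i = b :=
  beq_iff_eq

theorem exists_fin_conj_iff {n : ℕ} (hn : 0 < n) (L : List (HLabel n)) :
    ∃ c : Fin n → HLabel n, ∀ α, L.all (eval α) = true ↔ ∀ i, (c i).eval α = true := by
  classical
  by_cases hsat : ∃ α₀, L.all (eval α₀) = true
  · obtain ⟨α₀, hα₀⟩ := hsat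
    rw [List.all_eq_true] at hα₀
    refine ⟨fun i => if ∃ b, lit i b ∈ L then lit i (α₀ i) else const true, fun α => ?_⟩
    rw [List.all_eq_true]
    constructor
    · intro h i
      dsimp only
      split_ifs with hi
      · obtain ⟨b, hb⟩ := hi
        rw [eval_lit_eq_true, eval_lit_eq_true.1 (h _ hb), eval_lit_eq_true.1 (hα₀ _ hb)]
      · rfl
    · rintro h (b | ⟨i, b⟩) hx
      · exact hα₀ _ hx
      · have hi := h i
        dsimp only at hi
        rw [if_pos ⟨b, hx⟩] at hi
        rw [eval_lit_eq_true, ← eval_lit_eq_true.1 (hα₀ _ hx)]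
        exact eval_lit_eq_true.1 hi
  · push Not at hsat
    exact ⟨fun _ => const false, fun α =>
      ⟨fun h => absurd h (hsat α), fun h => absurd (h ⟨0, hn⟩) Bool.false_ne_true⟩⟩

end HLabel

namespace GenHGP

variable {n m k : ℕ}

/-- The copies `(v, i)`, `i < m`, of the vertices `v ∈ e`, numbered through
`Fin k × Fin m ≃ Fin (k * m)`. -/
def liftEdge (m : ℕ) (e : Finset (Fin k)) : Finset (Fin (k * m)) :=
  Finset.univ.filter fun w => (finProdFinEquiv.symm w).1 ∈ e

@[simp]
theorem mem_liftEdge {e : Finset (Fin k)} {w : Fin (k * m)} :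
    w ∈ liftEdge m e ↔ (finProdFinEquiv.symm w).1 ∈ e := by
  simp [liftEdge]

theorem finProdFinEquiv_mem_liftEdge {e : Finset (Fin k)} {v : Fin k} {i : Fin m} :
    finProdFinEquiv (v, i) ∈ liftEdge m e ↔ v ∈ e := by
  simp

theorem liftEdge_injective (hm : 0 < m) : Function.Injective (liftEdge (k := k) m) := by
  intro e g h
  ext v
  rw [← finProdFinEquiv_mem_liftEdge (i := ⟨0, hm⟩), h, finProdFinEquiv_mem_liftEdge]

theorem disjoint_liftEdge_iff (hm : 0 < m) {e g : Finset (Fin k)} :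
    Disjoint (liftEdge m e) (liftEdge m g) ↔ Disjoint e g := by
  simp only [Finset.disjoint_left, mem_liftEdge]
  refine ⟨fun h v hve hvg => ?_, fun h _ hw => h hw⟩
  exact h (a := finProdFinEquiv (v, ⟨0, hm⟩)) (by simpa) (by simpa)

theorem pairwise_disjoint_image_liftEdge_iff (hm : 0 < m) {T : Set (Finset (Fin k))} :
    (liftEdge m '' T).Pairwise Disjoint ↔ T.Pairwise Disjoint := by
  rw [(liftEdge_injective hm).injOn.pairwise_image]
  exact ⟨.mono' fun _ _ => (disjoint_liftEdge_iff hm).1,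
    .mono' fun _ _ => (disjoint_liftEdge_iff hm).2⟩

def blowup (P : GenHGP n) (c : Fin P.nv → Fin m → HLabel n) : GenHGP n where
  nv := P.nv * m
  label w := [c (finProdFinEquiv.symm w).1 (finProdFinEquiv.symm w).2]
  edges := P.edges.image (liftEdge m)

variable (P : GenHGP n) (c : Fin P.nv → Fin m → HLabel n)

theorem isOrdinary_blowup : (P.blowup c).IsOrdinary := fun _ => le_rfl

theorem evalLabel_blowup (α : Fin n → Bool) (w : Fin (P.blowup c).nv) :
    (P.blowup c).evalLabel α w =
      (c (finProdFinEquiv.symm w).1 (finProdFinEquiv.symm w).2).eval α := by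
  simp [evalLabel, blowup]

theorem size_blowup_le (hm : 0 < m) : (P.blowup c).size ≤ m * P.size :=
  calc (P.blowup c).size = P.nv * m + (P.edges.image (liftEdge m)).card := rfl
    _ ≤ m * P.nv + m * P.edges.card :=
      Nat.add_le_add (mul_comm _ _).le (Finset.card_image_le.trans (Nat.le_mul_of_pos_left _ hm))
    _ = m * P.size := (mul_add _ _ _).symm

theorem output_blowup_iff (hm : 0 < m) {α : Fin n → Bool}
    (hc : ∀ v, P.evalLabel α v = true ↔ ∀ i, (c v i).eval α = true) :
    (P.blowup c).output α ↔ P.output α := by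
  classical
  have hfalse : ∀ v, P.evalLabel α v = false ↔ ∃ i, (c v i).eval α = false := by
    simpa only [Bool.not_eq_true, not_forall] using fun v => (hc v).not
  constructor
  · rintro ⟨S', hS'sub, hS'disj, hS'cov⟩
    refine ⟨P.edges.filter (liftEdge m · ∈ S'), Finset.filter_subset _ _, ?_, fun v hv => ?_⟩
    · refine (pairwise_disjoint_image_liftEdge_iff hm).1 (hS'disj.mono ?_)
      rintro _ ⟨e, he, rfl⟩
      exact (Finset.mem_filter.1 he).2
    · obtain ⟨i, hi⟩ := (hfalse v).1 hv
      obtain ⟨e', he'S, hve'⟩ :=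
        hS'cov (finProdFinEquiv (v, i)) ((evalLabel_blowup P c α _).trans (by simpa using hi))
      obtain ⟨e, he, rfl⟩ := Finset.mem_image.1 (hS'sub he'S)
      exact ⟨e, Finset.mem_filter.2 ⟨he, he'S⟩, finProdFinEquiv_mem_liftEdge.1 hve'⟩
  · rintro ⟨S, hSsub, hSdisj, hScov⟩
    refine ⟨S.image (liftEdge m), Finset.image_subset_image hSsub, ?_, fun w hw => ?_⟩
    · have := (pairwise_disjoint_image_liftEdge_iff hm).2 hSdisj
      rwa [← Finset.coe_image] at this
    · obtain ⟨e, he, hve⟩ :=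
        hScov _ ((hfalse _).2 ⟨_, (evalLabel_blowup P c α w).symm.trans hw⟩)
      exact ⟨liftEdge m e, Finset.mem_image_of_mem _ he, mem_liftEdge.2 hve⟩

end GenHGP

/-- For every generalised hypergraph program `P` over `n` propositional
variables, there exists an (ordinary) hypergraph program `P'` computing the same Boolean
function with `|P'| ≤ n · |P|`. -/
theorem stmt_2 {n : ℕ} (hn : 1 ≤ n) (P : GenHGP n) :
    ∃ P' : GenHGP n, P'.IsOrdinary ∧ (∀ α, P'.output α ↔ P.output α) ∧
      P'.size ≤ n * P.size := by
  choose c hc using fun v => HLabel.exists_fin_conj_iff hn (P.label v)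
  exact ⟨P.blowup c, P.isOrdinary_blowup c, fun α => P.output_blowup_iff c hn fun v => hc v α,
    P.size_blowup_le c hn⟩
end

section
/- For any hypergraph H of degree at most d, there is a monotone hypergraph program of size O(|H|) computing the hypergraph function f_H whose underlying hypergraph has degree at most max(2, d). -/
/-- Evaluation of a vertex label that is either a constant (0 or 1) or a (positive)
Boolean variable. -/
def labEval {ι : Type*} (α : ι → Bool) : Bool ⊕ ι → Bool
  | .inl b => b
  | .inr i => α i

/-- A monotone hypergraph program over an abstract set `ι` of variables: vertices are
labelled by 0, 1 or a positive variable. -/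
structure MonHGP (ι : Type*) where
  nv : ℕ
  edges : Finset (Finset (Fin nv))
  label : Fin nv → Bool ⊕ ι

/-- The size of an HGP: number of vertices plus number of hyperedges. -/
def MonHGP.size {ι : Type*} (P : MonHGP ι) : ℕ := P.nv + P.edges.card

/-- Degree bound for an HGP: every vertex lies in at most `d` hyperedges. -/
def MonHGP.degLE {ι : Type*} (P : MonHGP ι) (d : ℕ) : Prop :=
  ∀ v : Fin P.nv, (P.edges.filter fun e => v ∈ e).card ≤ d

/-- Output of a monotone HGP: 1 iff some independent set of hyperedges contains all
vertices whose labels evaluate to 0. -/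
def MonHGP.output {ι : Type*} (P : MonHGP ι) (α : ι → Bool) : Prop :=
  ∃ S ⊆ P.edges, ((S : Set (Finset (Fin P.nv))).Pairwise fun e f => Disjoint e f) ∧
    ∀ v : Fin P.nv, labEval α (P.label v) = false → ∃ e ∈ S, v ∈ e

/-- The hypergraph function `f_H` over variables `p_v` (for vertices `v : Fin N`) and `p_e`
(for hyperedges `e ∈ E`). -/
def fHgen (N : ℕ) (E : Finset (Finset (Fin N))) (α : Fin N ⊕ Finset (Fin N) → Bool) : Prop :=
  ∃ S ⊆ E, ((S : Set (Finset (Fin N))).Pairwise fun e f => Disjoint e f) ∧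
    (∀ e ∈ S, α (Sum.inr e) = true) ∧
    (∀ v : Fin N, (∀ e ∈ S, v ∉ e) → α (Sum.inl v) = true)

/-!
Each hyperedge `e` of `H` becomes the hyperedge `e ∪ {a_e}` of the program, and the fresh vertex
`a_e` (labelled `1`) also lies in `{a_e, b_e}`, where `b_e` is labelled `p_e`. A family of
program edges is a choice of sets `T, U ⊆ E`, namely the `e ∪ {a_e}` with `e ∈ T` and the
`{a_e, b_e}` with `e ∈ U`; it is independent iff `T` is independent in `H` and
`T ∩ U = ∅`, and it covers the zero-labelled vertices iff `T` covers every `v` with `p_v = 0` and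
`U` contains every `e` with `p_e = 0`. Taking `U = {e | p_e = 0}`, these are exactly the
conditions that make `T` a witness for `f_H`. Original vertices keep their degree, `a_e` has
degree 2 and `b_e` degree 1, and there are `|V| + 2|E|` vertices and at most `2|E|` hyperedges.
-/

open Finset Function

theorem Finset.card_filter_mem_map_equiv {V W : Type*} [DecidableEq V] [DecidableEq W]
    (σ : V ≃ W) (edges : Finset (Finset V)) (w : W) :
    ((edges.map σ.finsetCongr.toEmbedding).filter (w ∈ ·)).card =
      (edges.filter (σ.symm w ∈ ·)).card := by
  rw [filter_map, card_map]
  congr 1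
  ext s
  simp [Equiv.finsetCongr_apply]

namespace MonHGP

section Relabel

variable {ι V W : Type*}

/-- `MonHGP.output` for a program whose vertices form an arbitrary type `V`. -/
def Accepts (edges : Finset (Finset V)) (label : V → Bool ⊕ ι) (α : ι → Bool) : Prop :=
  ∃ S ⊆ edges, (S : Set (Finset V)).Pairwise Disjoint ∧
    ∀ v, labEval α (label v) = false → ∃ e ∈ S, v ∈ e

theorem accepts_map_equiv (σ : V ≃ W) (edges : Finset (Finset V)) (label : V → Bool ⊕ ι)
    (α : ι → Bool) :
    Accepts (edges.map σ.finsetCongr.toEmbedding) (label ∘ σ.symm) α ↔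
      Accepts edges label α := by
  have hdisj (S : Finset (Finset V)) :
      (S.map σ.finsetCongr.toEmbedding : Set (Finset W)).Pairwise Disjoint ↔
        (S : Set (Finset V)).Pairwise Disjoint := by
    rw [coe_map, σ.finsetCongr.toEmbedding.injective.injOn.pairwise_image]
    congr!
    ext s t
    simp [onFun, Equiv.finsetCongr_apply]
  have hcov (S : Finset (Finset V)) :
      (∀ w, labEval α ((label ∘ σ.symm) w) = false →
          ∃ e ∈ S.map σ.finsetCongr.toEmbedding, w ∈ e) ↔
        ∀ v, labEval α (label v) = false → ∃ e ∈ S, v ∈ e := by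
    constructor
    · intro h v hv
      obtain ⟨_, hmem, hve⟩ := h (σ v) (by simpa using hv)
      obtain ⟨e, he, rfl⟩ := mem_map.1 hmem
      exact ⟨e, he, by simpa [Equiv.finsetCongr_apply] using hve⟩
    · intro h w hw
      obtain ⟨e, he, hwe⟩ := h (σ.symm w) hw
      exact ⟨_, mem_map_of_mem _ he, by simpa [Equiv.finsetCongr_apply] using hwe⟩
  simp only [Accepts, subset_map_iff]
  constructor
  · rintro ⟨_, ⟨S, hS, rfl⟩, hdisjS, hcovS⟩
    exact ⟨S, hS, (hdisj S).1 hdisjS, (hcov S).1 hcovS⟩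
  · rintro ⟨S, hS, hdisjS, hcovS⟩
    exact ⟨_, ⟨S, hS, rfl⟩, (hdisj S).2 hdisjS, (hcov S).2 hcovS⟩

end Relabel

variable {ι V : Type*} [Fintype V]

noncomputable def ofFintype (edges : Finset (Finset V)) (label : V → Bool ⊕ ι) : MonHGP ι where
  nv := Fintype.card V
  edges := edges.map (Fintype.equivFin V).finsetCongr.toEmbedding
  label := label ∘ (Fintype.equivFin V).symm

variable (edges : Finset (Finset V)) (label : V → Bool ⊕ ι)

theorem output_ofFintype (α : ι → Bool) :
    (ofFintype edges label).output α ↔ Accepts edges label α :=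
  accepts_map_equiv _ _ _ _

theorem degLE_ofFintype [DecidableEq V] {d : ℕ} (h : ∀ v, (edges.filter (v ∈ ·)).card ≤ d) :
    (ofFintype edges label).degLE d :=
  fun w => (card_filter_mem_map_equiv _ _ w).trans_le (h _)

theorem size_ofFintype : (ofFintype edges label).size = Fintype.card V + edges.card := by
  simp [size, ofFintype]

end MonHGP

namespace HypergraphFunction

variable {N : ℕ} {E : Finset (Finset (Fin N))}

variable (E) in
abbrev Vert := Fin N ⊕ E ⊕ E

def aVert (e : E) : Vert E := .inr (.inl e)

def bVert (e : E) : Vert E := .inr (.inr e)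

def extEdge (e : E) : Finset (Vert E) := insert (aVert e) ((e : Finset (Fin N)).map .inl)

def pairEdge (e : E) : Finset (Vert E) := {aVert e, bVert e}

@[simp] theorem inl_mem_extEdge {v : Fin N} {e : E} :
    (.inl v : Vert E) ∈ extEdge e ↔ v ∈ (e : Finset (Fin N)) := by
  simp [extEdge, aVert]

@[simp] theorem aVert_mem_extEdge {e f : E} : aVert f ∈ extEdge e ↔ f = e := by
  simp [extEdge, aVert]

@[simp] theorem bVert_notMem_extEdge {e f : E} : bVert f ∉ extEdge e := by
  simp [extEdge, aVert, bVert]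

@[simp] theorem inl_notMem_pairEdge {v : Fin N} {e : E} : (.inl v : Vert E) ∉ pairEdge e := by
  simp [pairEdge, aVert, bVert]

@[simp] theorem aVert_mem_pairEdge {e f : E} : aVert f ∈ pairEdge e ↔ f = e := by
  simp [pairEdge, aVert, bVert]

@[simp] theorem bVert_mem_pairEdge {e f : E} : bVert f ∈ pairEdge e ↔ f = e := by
  simp [pairEdge, aVert, bVert]

theorem disjoint_extEdge_iff {e f : E} :
    Disjoint (extEdge e) (extEdge f) ↔ e ≠ f ∧ Disjoint (e : Finset (Fin N)) f := by
  simp [extEdge, aVert, disjoint_left]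

theorem disjoint_extEdge_pairEdge_iff {e f : E} :
    Disjoint (extEdge e) (pairEdge f) ↔ e ≠ f := by
  simp [extEdge, pairEdge, aVert, bVert, disjoint_left]

theorem disjoint_pairEdge_iff {e f : E} : Disjoint (pairEdge e) (pairEdge f) ↔ e ≠ f := by
  simp [pairEdge, aVert, bVert, disjoint_left]

theorem forall_vert {P : Vert E → Prop} :
    (∀ w, P w) ↔ (∀ v, P (.inl v)) ∧ (∀ e, P (aVert e)) ∧ ∀ e, P (bVert e) :=
  Sum.forall.trans (and_congr_right' Sum.forall)

theorem extEdge_injective : Injective (extEdge (E := E)) :=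
  fun _ _ h => aVert_mem_extEdge.1 (h ▸ aVert_mem_extEdge.2 rfl)

theorem pairEdge_injective : Injective (pairEdge (E := E)) :=
  fun _ _ h => aVert_mem_pairEdge.1 (h ▸ aVert_mem_pairEdge.2 rfl)

theorem extEdge_ne_pairEdge (e f : E) : extEdge e ≠ pairEdge f :=
  fun h => bVert_notMem_extEdge (h ▸ bVert_mem_pairEdge.2 rfl)

def select (T U : Finset E) : Finset (Finset (Vert E)) := T.image extEdge ∪ U.image pairEdge

variable (E) in
def edges : Finset (Finset (Vert E)) := select univ univ

theorem mem_edges {x : Finset (Vert E)} :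
    x ∈ edges E ↔ (∃ e, extEdge e = x) ∨ ∃ e, pairEdge e = x := by
  simp [edges, select]

theorem subset_edges_iff {S : Finset (Finset (Vert E))} :
    S ⊆ edges E ↔ ∃ T U, S = select T U := by
  classical
  refine ⟨fun hS => ⟨univ.filter (extEdge · ∈ S), univ.filter (pairEdge · ∈ S), ?_⟩, ?_⟩
  · ext x
    simp only [select, mem_union, mem_image, mem_filter, mem_univ, true_and]
    constructor
    · intro hx
      rcases mem_edges.1 (hS hx) with ⟨e, rfl⟩ | ⟨e, rfl⟩
      exacts [Or.inl ⟨e, hx, rfl⟩, Or.inr ⟨e, hx, rfl⟩]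
    · rintro (⟨e, he, rfl⟩ | ⟨e, he, rfl⟩) <;> assumption
  · rintro ⟨T, U, rfl⟩
    exact union_subset_union (image_subset_image (subset_univ T))
      (image_subset_image (subset_univ U))

theorem pairwise_disjoint_select_iff {T U : Finset E} :
    (select T U : Set (Finset (Vert E))).Pairwise Disjoint ↔
      (T : Set E).Pairwise (Disjoint on ((↑) : E → Finset (Fin N))) ∧ Disjoint T U := by
  rw [select, coe_union, coe_image, coe_image, Set.pairwise_union_of_symm,
    extEdge_injective.injOn.pairwise_image, pairEdge_injective.injOn.pairwise_image]
  simp +contextual only [Set.Pairwise, onFun, Set.forall_mem_image, mem_coe, ne_eq,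
    disjoint_extEdge_iff, disjoint_pairEdge_iff, disjoint_extEdge_pairEdge_iff,
    extEdge_ne_pairEdge, not_false_eq_true, forall_const, implies_true, true_and,
    disjoint_iff_ne (s := T)]

variable (E) in
def label : Vert E → Bool ⊕ (Fin N ⊕ Finset (Fin N))
  | .inl v => .inr (.inl v)
  | .inr (.inl _) => .inl true
  | .inr (.inr e) => .inr (.inr e)

@[simp] theorem label_inl (v : Fin N) : label E (.inl v) = .inr (.inl v) := rfl

@[simp] theorem label_aVert (e : E) : label E (aVert e) = .inl true := rfl

@[simp] theorem label_bVert (e : E) : label E (bVert e) = .inr (.inr e) := rfl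

theorem exists_mem_select {T U : Finset E} {P : Finset (Vert E) → Prop} :
    (∃ x ∈ select T U, P x) ↔ (∃ e ∈ T, P (extEdge e)) ∨ ∃ e ∈ U, P (pairEdge e) := by
  simp only [select, mem_union, exists_mem_image, or_and_right, exists_or]

theorem covers_select_iff {T U : Finset E} {α : Fin N ⊕ Finset (Fin N) → Bool} :
    (∀ w, labEval α (label E w) = false → ∃ x ∈ select T U, w ∈ x) ↔
      (∀ v, α (.inl v) = false → ∃ e ∈ T, v ∈ (e : Finset (Fin N))) ∧
        ∀ e : E, α (.inr e) = false → e ∈ U := by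
  simp only [forall_vert, exists_mem_select]
  simp [labEval]

theorem fHgen_iff_exists_subtype {α : Fin N ⊕ Finset (Fin N) → Bool} :
    fHgen N E α ↔ ∃ T : Finset E, (T : Set E).Pairwise (Disjoint on ((↑) : E → Finset (Fin N))) ∧
      (∀ e ∈ T, α (.inr e) = true) ∧
      ∀ v, (∀ e ∈ T, v ∉ (e : Finset (Fin N))) → α (.inl v) = true := by
  constructor
  · rintro ⟨S, hSE, hdisj, hα, hcov⟩
    refine ⟨S.subtype (· ∈ E), fun e he f hf hne => ?_, fun e he => hα _ (mem_subtype.1 he),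
      fun v hv => hcov v fun e he => hv ⟨e, hSE he⟩ (mem_subtype.2 he)⟩
    exact hdisj (mem_subtype.1 he) (mem_subtype.1 hf) (Subtype.coe_injective.ne hne)
  · rintro ⟨T, hdisj, hα, hcov⟩
    refine ⟨T.map (.subtype _), fun e he => ?_, ?_, forall_mem_map.2 hα,
      fun v hv => hcov v fun e he => hv _ (mem_map_of_mem _ he)⟩
    · obtain ⟨e, -, rfl⟩ := mem_map.1 he
      exact e.2
    · rw [coe_map]
      exact hdisj.image

theorem accepts_edges_iff_fHgen {α : Fin N ⊕ Finset (Fin N) → Bool} :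
    MonHGP.Accepts (edges E) (label E) α ↔ fHgen N E α := by
  classical
  rw [fHgen_iff_exists_subtype]
  constructor
  · rintro ⟨S, hS, hdisj, hcov⟩
    obtain ⟨T, U, rfl⟩ := subset_edges_iff.1 hS
    obtain ⟨hdisjT, hTU⟩ := pairwise_disjoint_select_iff.1 hdisj
    obtain ⟨hcovV, hcovE⟩ := covers_select_iff.1 hcov
    refine ⟨T, hdisjT, fun e he => ?_, fun v hv => ?_⟩
    · by_contra h
      exact disjoint_left.1 hTU he (hcovE e (by simpa using h))
    · by_contra h
      obtain ⟨e, he, hve⟩ := hcovV v (by simpa using h)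
      exact hv e he hve
  · rintro ⟨T, hdisjT, hα, hcov⟩
    refine ⟨select T (univ.filter fun e => α (.inr e) = false), subset_edges_iff.2 ⟨_, _, rfl⟩,
      pairwise_disjoint_select_iff.2 ⟨hdisjT, ?_⟩, covers_select_iff.2 ⟨fun v hv => ?_, ?_⟩⟩
    · exact disjoint_left.2 fun e he he' => by simp [hα e he] at he'
    · by_contra! h
      simp [hcov v h] at hv
    · simp

theorem card_filter_mem_edges_le {d : ℕ} (hdeg : ∀ v : Fin N, (E.filter (v ∈ ·)).card ≤ d)
    (w : Vert E) : ((edges E).filter (w ∈ ·)).card ≤ max 2 d := by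
  have hsub {u : Vert E} {s : Finset (Finset (Vert E))}
      (hext : ∀ e, u ∈ extEdge e → extEdge e ∈ s) (hpair : ∀ e, u ∈ pairEdge e → pairEdge e ∈ s) :
      (edges E).filter (u ∈ ·) ⊆ s := by
    intro x hx
    obtain ⟨hx, hux⟩ := mem_filter.1 hx
    rcases mem_edges.1 hx with ⟨e, rfl⟩ | ⟨e, rfl⟩
    exacts [hext e hux, hpair e hux]
  revert w
  rw [forall_vert]
  refine ⟨fun v => ?_, fun e => ?_, fun e => ?_⟩
  · calc _ ≤ ((univ.filter fun e : E => v ∈ (e : Finset (Fin N))).image extEdge).card :=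
          card_le_card (hsub (fun e h => mem_image_of_mem _ (by simpa using h)) (by simp))
      _ ≤ (univ.filter fun e : E => v ∈ (e : Finset (Fin N))).card := card_image_le
      _ = (E.filter (v ∈ ·)).card := by
        rw [univ_eq_attach, filter_attach (v ∈ ·), card_map, card_attach]
      _ ≤ max 2 d := (hdeg v).trans (le_max_right _ _)
  · calc _ ≤ ({extEdge e, pairEdge e} : Finset _).card := card_le_card (hsub (by simp) (by simp))
      _ ≤ max 2 d := card_le_two.trans (le_max_left _ _)
  · calc _ ≤ ({pairEdge e} : Finset _).card := card_le_card (hsub (by simp) (by simp))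
      _ ≤ max 2 d := by simp

theorem card_vert_add_card_edges_le :
    Fintype.card (Vert E) + (edges E).card ≤ 4 * (N + E.card) := by
  have : (edges E).card ≤ E.card + E.card :=
    (card_union_le _ _).trans
      (add_le_add (card_image_le.trans (by simp)) (card_image_le.trans (by simp)))
  simp only [Vert, Fintype.card_sum, Fintype.card_fin, Fintype.card_coe]
  omega

end HypergraphFunction

open HypergraphFunction in
/-- For any hypergraph `H` of degree at most `d`, there is a monotone
hypergraph program of size `O(|H|)` computing the hypergraph function `f_H` whose
underlying hypergraph has degree at most `max 2 d`. -/
theorem stmt_4 :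
    ∃ c : ℕ, ∀ (N : ℕ) (E : Finset (Finset (Fin N))) (d : ℕ),
      (∀ v : Fin N, (E.filter fun e => v ∈ e).card ≤ d) →
      ∃ P : MonHGP (Fin N ⊕ Finset (Fin N)),
        (∀ α, P.output α ↔ fHgen N E α) ∧ P.degLE (max 2 d) ∧
        P.size ≤ c * (N + E.card) := by
  refine ⟨4, fun N E d hdeg => ⟨.ofFintype (edges E) (label E), fun α => ?_, ?_, ?_⟩⟩
  · rw [MonHGP.output_ofFintype, accepts_edges_iff_fHgen]
  · exact MonHGP.degLE_ofFintype _ _ (card_filter_mem_edges_le hdeg)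
  · rw [MonHGP.size_ofFintype]
    exact card_vert_add_card_edges_le
end

section
/- Any semi-unbounded fan-in circuit C of AND-depth d is equivalent to a semi-unbounded fan-in circuit C' of size at most 2^d · |C| and AND-depth d such that, for each n ≤ d, the union of the left-input subcircuits of the AND-gates of AND-depth n is disjoint from the union of their right-input subcircuits. -/
/-- A gate of a semi-unbounded fan-in circuit with `m` gates over `n` variables: an input
gate holding a literal (negations occur only on inputs), an AND-gate of fan-in 2, or an
OR-gate of unbounded fan-in. -/
inductive SUGate (n m : ℕ) where
  | input : Fin n → Bool → SUGate n m
  | and : Fin m → Fin m → SUGate n m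
  | or : Finset (Fin m) → SUGate n m

/-- A semi-unbounded fan-in circuit: gates are `0, …, size − 1`, and every gate takes its
inputs from gates with smaller indices (acyclicity). -/
structure SUCircuit (n : ℕ) where
  size : ℕ
  gate : Fin size → SUGate n size
  out : Fin size
  wf_and : ∀ g a b, gate g = SUGate.and a b → a < g ∧ b < g
  wf_or : ∀ g S, gate g = SUGate.or S → ∀ h ∈ S, h < g

/-- A valuation of the gates consistent with the circuit semantics on input `α`. -/
def SUConsistent {n : ℕ} (C : SUCircuit n) (α : Fin n → Bool)
    (v : Fin C.size → Prop) : Prop :=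
  ∀ g : Fin C.size,
    (∀ i b, C.gate g = SUGate.input i b → (v g ↔ α i = b)) ∧
    (∀ a b, C.gate g = SUGate.and a b → (v g ↔ v a ∧ v b)) ∧
    (∀ S, C.gate g = SUGate.or S → (v g ↔ ∃ h ∈ S, v h))

/-- `SUWire C a g` holds if gate `a` is an input (wire) of gate `g`. -/
def SUWire {n : ℕ} (C : SUCircuit n) (a g : Fin C.size) : Prop :=
  (∃ b, C.gate g = SUGate.and a b ∨ C.gate g = SUGate.and b a) ∨
  (∃ S, C.gate g = SUGate.or S ∧ a ∈ S)

/-- `D` assigns to each gate its AND-depth: the maximal number of AND-gates on a path from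
an input to the gate. -/
def IsANDdepth {n : ℕ} (C : SUCircuit n) (D : Fin C.size → ℕ) : Prop :=
  ∀ g : Fin C.size,
    (∀ i b, C.gate g = SUGate.input i b → D g = 0) ∧
    (∀ a b, C.gate g = SUGate.and a b → D g = max (D a) (D b) + 1) ∧
    (∀ S, C.gate g = SUGate.or S → D g = S.sup D)

/-!
Take `2^d` copies `(g, t)` of every gate `g`, tagged by `t ∈ {0,1}^d`. A copy of an OR-gate
reads the copies with the same tag of its inputs; a copy of an AND-gate `g` of AND-depth `m`
reads its left input from the copy whose tag has bit `m - 1` cleared and its right input from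
the copy whose tag has bit `m - 1` set. Projecting to the first component maps the new circuit
gate by gate onto the old one, so every copy computes the same function as its original and has
the same AND-depth. Along a wire into a gate `y`, the tag changes at most in bit
`depth y - 1`, and AND-depth never decreases along wires; hence every gate below the left input
of an AND-gate of depth `m` has bit `m - 1` cleared, every gate below the right input has it set,
and the two subcircuits are disjoint.
-/

namespace SUGate

variable {n m m' : ℕ}

def map (f : Fin m → Fin m') : SUGate n m → SUGate n m'
  | input i b => input i b
  | and a b => and (f a) (f b)
  | or S => or (S.image f)

end SUGate

namespace SUCircuit

variable {n : ℕ}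

def Covers (C' C : SUCircuit n) (π : Fin C'.size → Fin C.size) : Prop :=
  ∀ x, (C'.gate x).map π = C.gate (π x)

@[reducible] def ofCover (C : SUCircuit n) {N : ℕ} (gate : Fin N → SUGate n N) (out : Fin N)
    (π : Fin N → Fin C.size) (hπ : ∀ x, (gate x).map π = C.gate (π x))
    (hπ_lt : ∀ x y, π x < π y → x < y) : SUCircuit n where
  size := N
  gate := gate
  out := out
  wf_and g a b h := by
    have h' := (hπ g).symm.trans (congrArg (SUGate.map π) h)
    have := C.wf_and _ _ _ h'
    exact ⟨hπ_lt _ _ this.1, hπ_lt _ _ this.2⟩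
  wf_or g S h x hx := by
    have h' := (hπ g).symm.trans (congrArg (SUGate.map π) h)
    exact hπ_lt _ _ (C.wf_or _ _ h' _ (Finset.mem_image_of_mem π hx))

namespace Covers

variable {C C' : SUCircuit n} {π : Fin C'.size → Fin C.size}

theorem consistent_iff (hπ : Covers C' C π) {α : Fin n → Bool} {v : Fin C.size → Prop}
    {v' : Fin C'.size → Prop} (hv : SUConsistent C α v) (hv' : SUConsistent C' α v')
    (x : Fin C'.size) : v' x ↔ v (π x) := by
  induction x using WellFoundedLT.induction with
  | ind x ih =>
    have hx := hπ x
    rcases hC' : C'.gate x with ⟨i, b⟩ | ⟨a, b⟩ | S <;> rw [hC'] at hx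
    · rw [(hv' x).1 i b hC', (hv (π x)).1 i b hx.symm]
    · have hab := C'.wf_and x a b hC'
      rw [(hv' x).2.1 a b hC', (hv (π x)).2.1 _ _ hx.symm, ih a hab.1, ih b hab.2]
    · rw [(hv' x).2.2 S hC', (hv (π x)).2.2 _ hx.symm, Finset.exists_mem_image]
      exact exists_congr fun h => and_congr_right fun hh => ih h (C'.wf_or x S hC' h hh)

theorem isANDdepth (hπ : Covers C' C π) {D : Fin C.size → ℕ} (hD : IsANDdepth C D) :
    IsANDdepth C' (D ∘ π) := by
  intro x
  have hx := hπ x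
  refine ⟨fun i b h => ?_, fun a b h => ?_, fun S h => ?_⟩ <;> rw [h] at hx
  · exact (hD (π x)).1 i b hx.symm
  · exact (hD (π x)).2.1 _ _ hx.symm
  · rw [Function.comp_apply, (hD (π x)).2.2 _ hx.symm, Finset.sup_image]

end Covers

end SUCircuit

namespace IsANDdepth

variable {n : ℕ}

theorem le_of_wire {C : SUCircuit n} {D : Fin C.size → ℕ} (hD : IsANDdepth C D)
    {a g : Fin C.size} (h : SUWire C a g) : D a ≤ D g := by
  rcases h with ⟨b, h | h⟩ | ⟨S, h, ha⟩
  · rw [(hD g).2.1 _ _ h]; omega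
  · rw [(hD g).2.1 _ _ h]; omega
  · rw [(hD g).2.2 _ h]; exact Finset.le_sup ha

end IsANDdepth

namespace SUCircuit

variable {n N d : ℕ}

def setBit (t : Fin d → Bool) (j : ℕ) (b : Bool) : Fin d → Bool :=
  fun k => if (k : ℕ) = j then b else t k

theorem setBit_of_ne (t : Fin d → Bool) {j : ℕ} (b : Bool) {k : Fin d} (hk : (k : ℕ) ≠ j) :
    setBit t j b k = t k :=
  if_neg hk

theorem setBit_self (t : Fin d → Bool) (b : Bool) (k : Fin d) : setBit t k b k = b :=
  if_pos rfl

def bitsEquiv (d : ℕ) : (Fin d → Bool) ≃ Fin (2 ^ d) :=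
  ((Equiv.refl _).arrowCongr finTwoEquiv.symm).trans finFunctionFinEquiv

/-- Any numbering of the pairs would do, provided it is monotone in the first component:
that is what keeps the blown-up circuit acyclic. -/
def tagEquiv (N d : ℕ) : Fin N × (Fin d → Bool) ≃ Fin (N * 2 ^ d) :=
  (Equiv.prodCongr (Equiv.refl _) (bitsEquiv d)).trans finProdFinEquiv

theorem tagEquiv_lt_tagEquiv {a g : Fin N} (h : a < g) (s t : Fin d → Bool) :
    tagEquiv N d (a, s) < tagEquiv N d (g, t) := by
  have hs := (bitsEquiv d s).isLt
  have hag : 2 ^ d * ((a : ℕ) + 1) ≤ 2 ^ d * g := Nat.mul_le_mul_left _ h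
  change (bitsEquiv d s : ℕ) + 2 ^ d * a < bitsEquiv d t + 2 ^ d * g
  nlinarith

def base (x : Fin (N * 2 ^ d)) : Fin N := ((tagEquiv N d).symm x).1

def tag (x : Fin (N * 2 ^ d)) : Fin d → Bool := ((tagEquiv N d).symm x).2

@[simp] theorem base_tagEquiv (g : Fin N) (t : Fin d → Bool) :
    base (tagEquiv N d (g, t)) = g := by
  simp [base]

@[simp] theorem tag_tagEquiv (g : Fin N) (t : Fin d → Bool) :
    tag (tagEquiv N d (g, t)) = t := by
  simp [tag]

theorem lt_of_base_lt {x y : Fin (N * 2 ^ d)} (h : base x < base y) : x < y := by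
  rw [← (tagEquiv N d).apply_symm_apply x, ← (tagEquiv N d).apply_symm_apply y]
  exact tagEquiv_lt_tagEquiv h _ _

def separateGate (j : ℕ) (t : Fin d → Bool) : SUGate n N → SUGate n (N * 2 ^ d)
  | .input i b => .input i b
  | .and a b => .and (tagEquiv N d (a, setBit t j false)) (tagEquiv N d (b, setBit t j true))
  | .or S => .or (S.image fun h => tagEquiv N d (h, t))

theorem map_base_separateGate (j : ℕ) (t : Fin d → Bool) (G : SUGate n N) :
    (separateGate j t G).map base = G := by
  cases G <;> simp [separateGate, SUGate.map, Finset.image_image, Function.comp_def]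

@[reducible] def separate (C : SUCircuit n) (D : Fin C.size → ℕ) (d : ℕ) : SUCircuit n :=
  C.ofCover (fun x => separateGate (D (base x) - 1) (tag x) (C.gate (base x)))
    (tagEquiv _ d (C.out, fun _ => false)) base
    (fun _ => map_base_separateGate _ _ _) fun _ _ => lt_of_base_lt

variable {C : SUCircuit n} {D : Fin C.size → ℕ}

theorem covers_separate : Covers (C.separate D d) C base :=
  fun _ => map_base_separateGate _ _ _

theorem isANDdepth_separate (hD : IsANDdepth C D) : IsANDdepth (C.separate D d) (D ∘ base) :=
  covers_separate.isANDdepth hD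

theorem separate_gate (x : Fin (C.separate D d).size) :
    (C.separate D d).gate x = separateGate (D (base x) - 1) (tag x) (C.gate (base x)) :=
  rfl

theorem tag_eq_of_wire (hD : IsANDdepth C D) {x y : Fin (C.separate D d).size}
    (h : SUWire (C.separate D d) x y) {k : Fin d} (hk : D (base y) ≤ k) : tag x k = tag y k := by
  have hy := separate_gate (D := D) y
  rcases hC : C.gate (base y) with ⟨i, b⟩ | ⟨a, b⟩ | S <;> rw [hC] at hy
  · rcases h with ⟨_, h | h⟩ | ⟨_, h, _⟩ <;> rw [hy] at h <;> cases h
  · have hk' : (k : ℕ) ≠ D (base y) - 1 := by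
      have := (hD _).2.1 _ _ hC
      omega
    rcases h with ⟨_, h | h⟩ | ⟨_, h, _⟩ <;> rw [hy] at h <;> cases h <;>
      rw [tag_tagEquiv, setBit_of_ne _ _ hk']
  · rcases h with ⟨_, h | h⟩ | ⟨_, h, hx⟩ <;> rw [hy] at h <;> cases h
    obtain ⟨_, _, rfl⟩ := Finset.mem_image.1 hx
    rw [tag_tagEquiv]

theorem tag_eq_of_reflTransGen (hD : IsANDdepth C D) {x y : Fin (C.separate D d).size}
    (h : Relation.ReflTransGen (SUWire (C.separate D d)) x y) {k : Fin d}
    (hk : D (base y) ≤ k) : tag x k = tag y k := by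
  induction h with
  | refl => rfl
  | tail _ hw ih =>
    have hdepth := (isANDdepth_separate hD).le_of_wire hw
    exact (ih (hdepth.trans hk)).trans (tag_eq_of_wire hD hw hk)

theorem tag_of_gate_eq_and {g a b : Fin (C.separate D d).size}
    (h : (C.separate D d).gate g = .and a b) :
    tag a = setBit (tag g) (D (base g) - 1) false ∧
      tag b = setBit (tag g) (D (base g) - 1) true := by
  rw [separate_gate] at h
  rcases hC : C.gate (base g) with ⟨i, b⟩ | ⟨a, b⟩ | S <;>
    simp only [hC, separateGate, reduceCtorEq, SUGate.and.injEq] at h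
  obtain ⟨rfl, rfl⟩ := h
  exact ⟨tag_tagEquiv .., tag_tagEquiv ..⟩

theorem tag_below_and (hD : IsANDdepth C D) {g a b : Fin (C.separate D d).size}
    (hg : (C.separate D d).gate g = .and a b) {k : Fin d} (hk : (k : ℕ) + 1 = D (base g))
    (x : Fin (C.separate D d).size) :
    (Relation.ReflTransGen (SUWire (C.separate D d)) x a → tag x k = false) ∧
      (Relation.ReflTransGen (SUWire (C.separate D d)) x b → tag x k = true) := by
  have hab := (isANDdepth_separate hD g).2.1 _ _ hg
  simp only [Function.comp_apply] at hab
  have hk' : (k : ℕ) = D (base g) - 1 := by omega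
  obtain ⟨ha, hb⟩ := tag_of_gate_eq_and hg
  refine ⟨fun hx => ?_, fun hx => ?_⟩
  · rw [tag_eq_of_reflTransGen hD hx (k := k) (by omega), ha, ← hk', setBit_self]
  · rw [tag_eq_of_reflTransGen hD hx (k := k) (by omega), hb, ← hk', setBit_self]

theorem separate_disjoint (hD : IsANDdepth C D) {m : ℕ} (hm : m ≤ d)
    (x : Fin (C.separate D d).size) :
    ¬ ((∃ g a b, (C.separate D d).gate g = SUGate.and a b ∧ D (base g) = m ∧
          Relation.ReflTransGen (SUWire (C.separate D d)) x a) ∧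
       (∃ g a b, (C.separate D d).gate g = SUGate.and a b ∧ D (base g) = m ∧
          Relation.ReflTransGen (SUWire (C.separate D d)) x b)) := by
  rintro ⟨⟨g, a, b, hg, hgm, hxa⟩, g', a', b', hg', hg'm, hxb'⟩
  have hpos := (isANDdepth_separate hD g).2.1 _ _ hg
  simp only [Function.comp_apply] at hpos
  let k : Fin d := ⟨m - 1, by omega⟩
  have hfalse := (tag_below_and hD hg (k := k) (by dsimp only [k]; omega) x).1 hxa
  have htrue := (tag_below_and hD hg' (k := k) (by dsimp only [k]; omega) x).2 hxb'
  exact Bool.false_ne_true (hfalse.symm.trans htrue)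

end SUCircuit

/-- Any semi-unbounded fan-in circuit `C` of AND-depth `d` is equivalent to a
semi-unbounded fan-in circuit `C'` of size at most `2^d · |C|` and AND-depth `d` such that,
for each `m ≤ d`, the union of the left-input subcircuits of the AND-gates of AND-depth `m`
is disjoint from the union of their right-input subcircuits. -/
theorem stmt_9 {n d : ℕ} (C : SUCircuit n) (D : Fin C.size → ℕ)
    (hD : IsANDdepth C D) (hd : ∀ g, D g ≤ d) :
    ∃ (C' : SUCircuit n) (D' : Fin C'.size → ℕ),
      (∀ (α : Fin n → Bool) (v : Fin C.size → Prop) (v' : Fin C'.size → Prop),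
        SUConsistent C α v → SUConsistent C' α v' → (v C.out ↔ v' C'.out)) ∧
      C'.size ≤ 2 ^ d * C.size ∧
      IsANDdepth C' D' ∧ (∀ g, D' g ≤ d) ∧
      (∀ m ≤ d, ∀ x : Fin C'.size,
        ¬ ((∃ g a b, C'.gate g = SUGate.and a b ∧ D' g = m ∧
              Relation.ReflTransGen (SUWire C') x a) ∧
           (∃ g a b, C'.gate g = SUGate.and a b ∧ D' g = m ∧
              Relation.ReflTransGen (SUWire C') x b))) := by
  refine ⟨C.separate D d, D ∘ SUCircuit.base, fun α v v' hv hv' => ?_, (Nat.mul_comm _ _).le,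
    SUCircuit.isANDdepth_separate hD, fun _ => hd _,
    fun m hm x => SUCircuit.separate_disjoint hD hm x⟩
  rw [SUCircuit.covers_separate.consistent_iff hv hv', SUCircuit.base_tagEquiv]
end

section
/- Every Boolean function computable by a polynomial-size nondeterministic branching program is computable by a polynomial-size hypergraph program of degree at most 2, and conversely every function computable by a polynomial-size hypergraph program of degree 2 is computable by a polynomial-size nondeterministic branching program (i.e., HGP² = NL/poly as non-uniform classes). -/
/-- Evaluation of an arc/vertex label: a Boolean constant, or a literal (a variable with a
polarity). -/
def litEval {n : ℕ} (α : Fin n → Bool) : Bool ⊕ (Fin n × Bool) → Bool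
  | .inl b => b
  | .inr (i, pol) => α i == pol

/-- A nondeterministic branching program over `n` Boolean variables: a directed graph with
arcs labelled by constants or literals and two distinguished vertices `src` and `tgt`. -/
structure NBP (n : ℕ) where
  nv : ℕ
  arcs : Finset (Fin nv × Fin nv × (Bool ⊕ (Fin n × Bool)))
  src : Fin nv
  tgt : Fin nv

def NBP.size {n : ℕ} (B : NBP n) : ℕ := B.nv + B.arcs.card

/-- One step along an arc whose label evaluates to 1 under `α`. -/
def NBP.Step {n : ℕ} (B : NBP n) (α : Fin n → Bool) (u v : Fin B.nv) : Prop :=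
  ∃ l, (u, v, l) ∈ B.arcs ∧ litEval α l = true

/-- An NBP computes `f` if `f α = 1` iff there is a path from `src` to `tgt` all of whose
labels evaluate to 1 under `α`. -/
def NBP.Computes {n : ℕ} (B : NBP n) (f : (Fin n → Bool) → Bool) : Prop :=
  ∀ α, f α = true ↔ Relation.ReflTransGen (B.Step α) B.src B.tgt

/-- A hypergraph program over `n` Boolean variables: vertices labelled by constants or
literals; hyperedges are sets of vertices. -/
structure HGP (n : ℕ) where
  nv : ℕ
  edges : Finset (Finset (Fin nv))
  label : Fin nv → Bool ⊕ (Fin n × Bool)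

def HGP.size {n : ℕ} (P : HGP n) : ℕ := P.nv + P.edges.card

/-- Degree bound for an HGP: every vertex lies in at most `d` hyperedges. -/
def HGP.degLE {n : ℕ} (P : HGP n) (d : ℕ) : Prop :=
  ∀ v : Fin P.nv, (P.edges.filter fun e => v ∈ e).card ≤ d

/-- An HGP computes `f` if `f α = 1` iff some independent (pairwise disjoint) set of
hyperedges contains every vertex whose label evaluates to 0 under `α`. -/
def HGP.Computes {n : ℕ} (P : HGP n) (f : (Fin n → Bool) → Bool) : Prop :=
  ∀ α, f α = true ↔
    ∃ S ⊆ P.edges, ((S : Set (Finset (Fin P.nv))).Pairwise fun e f => Disjoint e f) ∧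
      ∀ v : Fin P.nv, litEval α (P.label v) = false → ∃ e ∈ S, v ∈ e

/-!
A hypergraph program of degree at most 2 is a 2-CNF in disguise. Read "hyperedge `e` is chosen"
as a variable: disjointness says that two hyperedges sharing a vertex are not both chosen, and
covering says that one of the (at most two) hyperedges through each vertex labelled `0` is
chosen. So such a program rejects iff a vertex labelled `0` lies in no hyperedge, or in the
implication graph of the 2-CNF some literal and its negation reach each other; an NBP detects
this by guessing the two paths. Conversely, non-reachability in an NBP is expressed by a degree-2
program choosing, for every vertex `v`, one of the hyperedges "`v` is reachable" and "`v` is not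
reachable", with one gadget per arc propagating reachability. Both translations produce the
complement of the function, and polynomial-size NBPs are closed under complement by the
inductive counting of Immerman and Szelepcsényi: knowing the number of vertices reachable in
`i` steps, an NBP can certify that a vertex is not reachable in `i + 1` steps, and hence count
those that are.
-/

open Finset Relation Classical

noncomputable section

lemma reflTransGen_iff_of_forall_eq {α : Type*} {r : α → α → Prop} {a b : α} (hab : a ≠ b)
    (h : ∀ x y, r x y → x = a ∧ y = b) : ReflTransGen r a b ↔ r a b := by
  refine ⟨fun hr => ?_, ReflTransGen.single⟩
  rcases hr.cases_tail with rfl | ⟨c, -, hcb⟩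
  · exact absurd rfl hab
  · obtain rfl := (h c b hcb).1
    exact hcb

lemma Fin.reflTransGen_castSucc_succ_iff {k : ℕ} (P : Fin k → Prop) :
    ReflTransGen (fun a b => ∃ i, i.castSucc = a ∧ i.succ = b ∧ P i) 0 (Fin.last k) ↔
      ∀ i, P i := by
  set R := fun a b : Fin (k + 1) => ∃ i, i.castSucc = a ∧ i.succ = b ∧ P i
  constructor
  · have key : ∀ a, ReflTransGen R 0 a → ∀ i : Fin k, (i : ℕ) < a → P i := by
      intro a ha
      induction ha with
      | refl => simp
      | tail _ hstep ih =>
        obtain ⟨j, rfl, rfl, hj⟩ := hstep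
        intro i hi
        rw [Fin.val_succ] at hi
        rcases Nat.lt_succ_iff_lt_or_eq.mp hi with hlt | heq
        · exact ih i (by rwa [Fin.val_castSucc])
        · exact Fin.ext heq ▸ hj
    exact fun h i => key _ h i (by simp)
  · intro h
    have key : ∀ m (hm : m ≤ k), ReflTransGen R 0 ⟨m, by omega⟩ := by
      intro m hm
      induction m with
      | zero => rfl
      | succ m ih => exact (ih (by omega)).tail ⟨⟨m, hm⟩, rfl, rfl, h _⟩
    exact key k le_rfl

abbrev BPLabel (n : ℕ) := Bool ⊕ (Fin n × Bool)

namespace BPLabel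

variable {n : ℕ}

def neg : BPLabel n → BPLabel n
  | .inl b => .inl !b
  | .inr (i, b) => .inr (i, !b)

@[simp]
lemma litEval_neg (α : Fin n → Bool) (l : BPLabel n) : litEval α l.neg = !litEval α l := by
  rcases l with b | ⟨i, b⟩
  · rfl
  · cases h : α i <;> cases b <;> simp [neg, litEval, h]

def Holds {S : Type*} (α : Fin n → Bool) (A : S → S → BPLabel n → Prop) (a b : S) : Prop :=
  ∃ l, A a b l ∧ litEval α l = true

end BPLabel

open BPLabel

namespace NBP

variable {n : ℕ}

def Accepts (B : NBP n) (α : Fin n → Bool) : Prop :=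
  ReflTransGen (B.Step α) B.src B.tgt

lemma computes_iff (B : NBP n) (f : (Fin n → Bool) → Bool) :
    B.Computes f ↔ ∀ α, f α = true ↔ B.Accepts α := Iff.rfl

/-! ### Building branching programs from smaller ones -/

section OfRel

def ofRel (S : Type) [Fintype S] (A : S → S → BPLabel n → Prop) (s t : S) : NBP n where
  nv := Fintype.card S
  arcs := univ.filter fun x =>
    A ((Fintype.equivFin S).symm x.1) ((Fintype.equivFin S).symm x.2.1) x.2.2
  src := Fintype.equivFin S s
  tgt := Fintype.equivFin S t

variable (S : Type) [Fintype S] (A : S → S → BPLabel n → Prop) (s t : S)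

@[simp]
lemma nv_ofRel : (ofRel S A s t).nv = Fintype.card S := rfl

lemma step_ofRel (α : Fin n → Bool) (x y : Fin (Fintype.card S)) :
    (ofRel S A s t).Step α x y ↔
      Holds α A ((Fintype.equivFin S).symm x) ((Fintype.equivFin S).symm y) := by
  refine exists_congr fun l => and_congr_left fun _ => ?_
  exact ⟨fun h => (mem_filter.mp h).2, fun h => mem_filter.mpr ⟨mem_univ _, h⟩⟩

lemma accepts_ofRel (α : Fin n → Bool) :
    (ofRel S A s t).Accepts α ↔ ReflTransGen (Holds α A) s t := by
  constructor
  · intro h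
    simpa [Function.onFun, ofRel] using
      h.lift _ fun x y hxy => (step_ofRel S A s t α x y).mp hxy
  · intro h
    exact h.lift _ fun x y hxy => (step_ofRel S A s t α _ _).mpr (by simpa using hxy)

lemma size_ofRel_le : (ofRel S A s t).size ≤ 3 * Fintype.card S ^ 2 * (n + 1) := by
  have harcs : (ofRel S A s t).arcs.card ≤ Fintype.card S ^ 2 * (2 + 2 * n) := by
    refine (card_filter_le _ _).trans (le_of_eq ?_)
    simp [Fintype.card_sum, Fintype.card_prod]
    ring
  have hS : Fintype.card S ≤ Fintype.card S ^ 2 := Nat.le_self_pow two_ne_zero _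
  calc (ofRel S A s t).size ≤ Fintype.card S ^ 2 + Fintype.card S ^ 2 * (2 + 2 * n) :=
        Nat.add_le_add hS harcs
    _ ≤ 3 * Fintype.card S ^ 2 * (n + 1) := by ring_nf; omega

end OfRel

section Assemble

variable {Q ι : Type}

/-- Arcs of `assemble`: each transition `i` of the outer system becomes a copy of `box i`,
entered from `ep i` and left to `ex i` by constant-`1` arcs. -/
def assembleArc (ep ex : ι → Q) (box : ι → NBP n) :
    (Q ⊕ Σ i, Fin (box i).nv) → (Q ⊕ Σ i, Fin (box i).nv) → BPLabel n → Prop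
  | .inl a, .inr ⟨i, g⟩, l => ep i = a ∧ g = (box i).src ∧ l = .inl true
  | .inr ⟨i, g⟩, .inl b, l => ex i = b ∧ g = (box i).tgt ∧ l = .inl true
  | .inr p, .inr q, l =>
      ∃ (i : ι) (g g' : Fin (box i).nv), p = ⟨i, g⟩ ∧ q = ⟨i, g'⟩ ∧
        (g, g', l) ∈ (box i).arcs
  | .inl _, .inl _, _ => False

def assemble [Fintype Q] [Fintype ι] (ep ex : ι → Q) (box : ι → NBP n) (s t : Q) : NBP n :=
  ofRel (Q ⊕ Σ i, Fin (box i).nv) (assembleArc ep ex box) (.inl s) (.inl t)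

variable (ep ex : ι → Q) (box : ι → NBP n) (α : Fin n → Bool)

def OuterStep (a b : Q) : Prop := ∃ i, ep i = a ∧ ex i = b ∧ (box i).Accepts α

def AssembleInv (s : Q) : (Q ⊕ Σ i, Fin (box i).nv) → Prop
  | .inl a => ReflTransGen (OuterStep ep ex box α) s a
  | .inr ⟨i, g⟩ =>
      ReflTransGen (OuterStep ep ex box α) s (ep i) ∧
        ReflTransGen ((box i).Step α) (box i).src g

lemma assembleInv_of_holds {s : Q} {x y : Q ⊕ Σ i, Fin (box i).nv}
    (hxy : Holds α (assembleArc ep ex box) x y) (hx : AssembleInv ep ex box α s x) :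
    AssembleInv ep ex box α s y := by
  obtain ⟨l, harc, hl⟩ := hxy
  rcases x with a | ⟨i, g⟩ <;> rcases y with b | ⟨j, g'⟩
  · exact harc.elim
  · obtain ⟨rfl, rfl, -⟩ := harc
    exact ⟨hx, .refl⟩
  · obtain ⟨rfl, rfl, -⟩ := harc
    exact hx.1.tail ⟨i, rfl, rfl, hx.2⟩
  · obtain ⟨_, _, _, ⟨⟩, ⟨⟩, harc⟩ := harc
    exact ⟨hx.1, hx.2.tail ⟨l, harc, hl⟩⟩

lemma reflTransGen_holds_of_outerStep {a b : Q} (h : OuterStep ep ex box α a b) :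
    ReflTransGen (Holds α (assembleArc ep ex box)) (.inl a) (.inl b) := by
  obtain ⟨i, rfl, rfl, hi⟩ := h
  let inBox (g : Fin (box i).nv) : Q ⊕ Σ j, Fin (box j).nv := .inr ⟨i, g⟩
  have enter : Holds α (assembleArc ep ex box) (.inl (ep i)) (inBox (box i).src) :=
    ⟨.inl true, ⟨rfl, rfl, rfl⟩, rfl⟩
  have inside : ReflTransGen (Holds α (assembleArc ep ex box))
      (inBox (box i).src) (inBox (box i).tgt) :=
    hi.lift inBox fun g g' ⟨l, harc, hl⟩ => ⟨l, ⟨i, g, g', rfl, rfl, harc⟩, hl⟩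
  have leave : Holds α (assembleArc ep ex box) (inBox (box i).tgt) (.inl (ex i)) :=
    ⟨.inl true, ⟨rfl, rfl, rfl⟩, rfl⟩
  exact (ReflTransGen.head enter inside).tail leave

lemma accepts_assemble [Fintype Q] [Fintype ι] (s t : Q) :
    (assemble ep ex box s t).Accepts α ↔ ReflTransGen (OuterStep ep ex box α) s t := by
  rw [assemble, accepts_ofRel]
  constructor
  · intro h
    have key : ∀ x, ReflTransGen (Holds α (assembleArc ep ex box)) (.inl s) x →
        AssembleInv ep ex box α s x := fun x hx => by
      induction hx with
      | refl => exact .refl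
      | tail _ hstep ih => exact assembleInv_of_holds ep ex box α hstep ih
    exact key _ h
  · intro h
    induction h with
    | refl => rfl
    | tail _ hstep ih => exact ih.trans (reflTransGen_holds_of_outerStep ep ex box α hstep)

lemma nv_assemble_le [Fintype Q] [Fintype ι] (s t : Q) {K : ℕ} (hK : ∀ i, (box i).nv ≤ K) :
    (assemble ep ex box s t).nv ≤ Fintype.card Q + Fintype.card ι * K := by
  simp only [assemble, nv_ofRel, Fintype.card_sum, Fintype.card_sigma, Fintype.card_fin]
  gcongr
  simpa using Finset.sum_le_card_nsmul univ _ K fun i _ => hK i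

end Assemble

section Combinators

variable (α : Fin n → Bool)

def lit (l : BPLabel n) : NBP n :=
  ofRel Bool (fun a b l' => a = false ∧ b = true ∧ l' = l) false true

@[simp]
lemma accepts_lit (l : BPLabel n) : (lit l).Accepts α ↔ litEval α l = true := by
  rw [lit, accepts_ofRel,
    reflTransGen_iff_of_forall_eq Bool.false_ne_true fun _ _ ⟨_, h, _⟩ => ⟨h.1, h.2.1⟩]
  exact ⟨fun ⟨_, ⟨_, _, hl⟩, h⟩ => hl ▸ h, fun h => ⟨l, ⟨rfl, rfl, rfl⟩, h⟩⟩

@[simp]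
lemma nv_lit (l : BPLabel n) : (lit l).nv = 2 := rfl

abbrev const (b : Bool) : NBP n := lit (.inl b)

variable {ι : Type} [Fintype ι] (box : ι → NBP n)

def any : NBP n := assemble (fun _ => false) (fun _ => true) box false true

@[simp]
lemma accepts_any : (any box).Accepts α ↔ ∃ i, (box i).Accepts α := by
  rw [any, accepts_assemble, reflTransGen_iff_of_forall_eq Bool.false_ne_true
    fun _ _ ⟨_, h, h', _⟩ => ⟨h.symm, h'.symm⟩]
  exact ⟨fun ⟨i, _, _, h⟩ => ⟨i, h⟩, fun ⟨i, h⟩ => ⟨i, rfl, rfl, h⟩⟩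

lemma nv_any_le {K : ℕ} (hK : ∀ i, (box i).nv ≤ K) :
    (any box).nv ≤ 2 + Fintype.card ι * K :=
  nv_assemble_le _ _ _ _ _ hK

def all : NBP n :=
  assemble Fin.castSucc Fin.succ (fun j => box ((Fintype.equivFin ι).symm j)) 0 (Fin.last _)

@[simp]
lemma accepts_all : (all box).Accepts α ↔ ∀ i, (box i).Accepts α := by
  rw [all, accepts_assemble]
  unfold OuterStep
  rw [Fin.reflTransGen_castSucc_succ_iff, (Fintype.equivFin ι).symm.forall_congr_left]
  simp

lemma nv_all_le {K : ℕ} (hK : ∀ i, (box i).nv ≤ K) :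
    (all box).nv ≤ Fintype.card ι + 1 + Fintype.card ι * K := by
  simpa [all] using nv_assemble_le Fin.castSucc Fin.succ _ 0 (Fin.last _) fun j => hK _

end Combinators

section Count

variable (α : Fin n → Bool) {m : ℕ} (yes no : Fin m → NBP n)

/-- Scans `u = 0, …, m - 1`, passing from state `(u, d)` to `(u + 1, d + 1)` through `yes u`
or to `(u + 1, d)` through `no u`. -/
def count (c : Fin (m + 1)) : NBP n :=
  assemble (Q := Fin (m + 1) × Fin (m + 1)) (ι := (Fin m × Fin m) ⊕ (Fin m × Fin (m + 1)))
    (Sum.elim (fun p => (p.1.castSucc, p.2.castSucc)) (fun p => (p.1.castSucc, p.2)))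
    (Sum.elim (fun p => (p.1.succ, p.2.succ)) (fun p => (p.1.succ, p.2)))
    (Sum.elim (fun p => yes p.1) (fun p => no p.1)) (0, 0) (Fin.last m, c)

def CountStep (p q : Fin (m + 1) × Fin (m + 1)) : Prop :=
  ∃ u : Fin m, (p.1 : ℕ) = u ∧ (q.1 : ℕ) = u + 1 ∧
    ((q.2 : ℕ) = p.2 + 1 ∧ (yes u).Accepts α ∨ q.2 = p.2 ∧ (no u).Accepts α)

lemma accepts_count_iff_reflTransGen (c : Fin (m + 1)) :
    (count yes no c).Accepts α ↔ ReflTransGen (CountStep α yes no) (0, 0) (Fin.last m, c) := by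
  rw [count, accepts_assemble]
  refine ⟨fun h => ReflTransGen.mono (fun p q h => ?_) _ _ h,
    fun h => ReflTransGen.mono (fun p q h => ?_) _ _ h⟩
  · obtain ⟨⟨u, d⟩ | ⟨u, d⟩, rfl, rfl, hi⟩ := h
    · exact ⟨u, by simp, by simp, Or.inl ⟨by simp, hi⟩⟩
    · exact ⟨u, by simp, by simp, Or.inr ⟨rfl, hi⟩⟩
  · obtain ⟨u, hp, hq, ⟨hd, hy⟩ | ⟨hd, hn⟩⟩ := h
    · refine ⟨.inl (u, ⟨p.2, by omega⟩), ?_, ?_, hy⟩ <;> ext <;> simp [hp, hq, hd]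
    · refine ⟨.inr (u, p.2), ?_, ?_, hn⟩ <;> ext <;> simp [hp, hq, hd]

lemma exists_finset_of_reflTransGen_countStep {p : Fin (m + 1) × Fin (m + 1)}
    (hp : ReflTransGen (CountStep α yes no) (0, 0) p) :
    ∃ T : Finset (Fin m), T.card = p.2 ∧
      (∀ u ∈ T, (u : ℕ) < p.1 ∧ (yes u).Accepts α) ∧
      ∀ u : Fin m, (u : ℕ) < p.1 → u ∉ T → (no u).Accepts α := by
  induction hp with
  | refl => exact ⟨∅, by simp, by simp, by simp⟩
  | @tail p q _ hpq ih =>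
    obtain ⟨T, hcard, hT, hnT⟩ := ih
    obtain ⟨u, hp, hq, ⟨hd, hy⟩ | ⟨hd, hn⟩⟩ := hpq
    · have hu : u ∉ T := fun hu => (hT u hu).1.ne' (by omega)
      refine ⟨insert u T, by rw [card_insert_of_notMem hu, hcard, hd], ?_, ?_⟩
      · simp only [mem_insert, forall_eq_or_imp]
        exact ⟨⟨by omega, hy⟩, fun w hw => ⟨by have := (hT w hw).1; omega, (hT w hw).2⟩⟩
      · intro w hw hwT
        rw [mem_insert, not_or] at hwT
        exact hnT w (by have := Fin.val_ne_of_ne hwT.1; omega) hwT.2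
    · refine ⟨T, by rw [hcard, hd],
        fun w hw => ⟨by have := (hT w hw).1; omega, (hT w hw).2⟩, fun w hw hwT => ?_⟩
      by_cases hwu : w = u
      · exact hwu ▸ hn
      · exact hnT w (by have := Fin.val_ne_of_ne hwu; omega) hwT

lemma card_filter_val_lt_le (T : Finset (Fin m)) (a : ℕ) :
    (T.filter fun w : Fin m => (w : ℕ) < a).card ≤ a := by
  calc (T.filter fun w : Fin m => (w : ℕ) < a).card ≤ (range a).card :=
        card_le_card_of_injOn Fin.val (fun w hw => by simpa using (mem_filter.mp hw).2)
          Fin.val_injective.injOn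
    _ = a := card_range a

lemma filter_val_lt_succ (T : Finset (Fin m)) (u : Fin m) :
    T.filter (fun w : Fin m => (w : ℕ) < (u : ℕ) + 1) =
      if u ∈ T then insert u (T.filter fun w : Fin m => (w : ℕ) < u)
      else T.filter fun w : Fin m => (w : ℕ) < u := by
  ext w
  split_ifs with hu
  · simp only [mem_filter, mem_insert]
    constructor
    · rintro ⟨hw, hlt⟩
      rcases Nat.lt_succ_iff_lt_or_eq.mp hlt with h | h
      · exact Or.inr ⟨hw, h⟩
      · exact Or.inl (Fin.ext h)
    · rintro (rfl | ⟨hw, hlt⟩)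
      · exact ⟨hu, by omega⟩
      · exact ⟨hw, by omega⟩
  · simp only [mem_filter, and_congr_right_iff]
    intro hw
    have : w ≠ u := fun h => hu (h ▸ hw)
    have := Fin.val_ne_of_ne this
    omega

lemma reflTransGen_countStep_of_finset (T : Finset (Fin m))
    (hT : ∀ u ∈ T, (yes u).Accepts α) (hnT : ∀ u ∉ T, (no u).Accepts α) (a : ℕ)
    (ha : a ≤ m) :
    ReflTransGen (CountStep α yes no) (0, 0)
      (⟨a, by omega⟩, ⟨(T.filter fun w : Fin m => (w : ℕ) < a).card,
        by have := card_filter_val_lt_le T a; omega⟩) := by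
  induction a with
  | zero => simpa using ReflTransGen.refl
  | succ a ih =>
    refine (ih (by omega)).tail ⟨⟨a, ha⟩, rfl, rfl, ?_⟩
    have hfilter := filter_val_lt_succ T ⟨a, ha⟩
    simp only at hfilter ⊢
    by_cases hu : (⟨a, ha⟩ : Fin m) ∈ T
    · rw [if_pos hu] at hfilter
      exact Or.inl ⟨by rw [hfilter, card_insert_of_notMem (by simp)], hT _ hu⟩
    · rw [if_neg hu] at hfilter
      exact Or.inr ⟨Fin.ext (congrArg card hfilter), hnT _ hu⟩

lemma accepts_count (c : Fin (m + 1)) :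
    (count yes no c).Accepts α ↔ ∃ T : Finset (Fin m), T.card = c ∧
      (∀ u ∈ T, (yes u).Accepts α) ∧ ∀ u ∉ T, (no u).Accepts α := by
  rw [accepts_count_iff_reflTransGen]
  constructor
  · intro h
    obtain ⟨T, hcard, hT, hnT⟩ := exists_finset_of_reflTransGen_countStep α yes no h
    exact ⟨T, hcard, fun u hu => (hT u hu).2, fun u hu => hnT u (by simp) hu⟩
  · rintro ⟨T, hcard, hT, hnT⟩
    convert reflTransGen_countStep_of_finset α yes no T hT hnT m le_rfl
    · simp
    · rw [← hcard, filter_true_of_mem fun w _ => w.isLt]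

lemma nv_count_le (c : Fin (m + 1)) {K : ℕ} (hyes : ∀ u, (yes u).nv ≤ K)
    (hno : ∀ u, (no u).nv ≤ K) : (count yes no c).nv ≤ (m + 1) ^ 2 * (1 + 2 * K) := by
  refine (nv_assemble_le _ _ _ _ _ (K := K) ?_).trans ?_
  · rintro (i | i)
    exacts [hyes _, hno _]
  · simp only [Fintype.card_sum, Fintype.card_prod, Fintype.card_fin]
    nlinarith

end Count

/-! ### Closure under complement: inductive counting -/

section ReachWithin

variable (B : NBP n) (α : Fin n → Bool)

def reachWithin : ℕ → Finset (Fin B.nv)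
  | 0 => {B.src}
  | i + 1 => reachWithin i ∪ univ.filter fun v => ∃ u ∈ reachWithin i, B.Step α u v

variable {B α}

@[simp]
lemma reachWithin_zero : B.reachWithin α 0 = {B.src} := rfl

lemma mem_reachWithin_succ {i : ℕ} {v : Fin B.nv} :
    v ∈ B.reachWithin α (i + 1) ↔
      v ∈ B.reachWithin α i ∨ ∃ u ∈ B.reachWithin α i, B.Step α u v := by
  simp [reachWithin]

lemma reachWithin_subset_succ (i : ℕ) : B.reachWithin α i ⊆ B.reachWithin α (i + 1) :=
  subset_union_left

lemma reachWithin_mono : Monotone (B.reachWithin α) :=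
  monotone_nat_of_le_succ reachWithin_subset_succ

lemma reachWithin_add_eq_of_succ_eq {i : ℕ} (h : B.reachWithin α (i + 1) = B.reachWithin α i)
    (j : ℕ) : B.reachWithin α (i + j) = B.reachWithin α i := by
  induction j with
  | zero => rfl
  | succ j ih => rw [← add_assoc, reachWithin, ih, ← reachWithin, h]

/-- Pigeonhole: the sets `reachWithin i` cannot grow strictly for more than `B.nv` steps. -/
lemma exists_reachWithin_succ_eq :
    ∃ i ≤ B.nv, B.reachWithin α (i + 1) = B.reachWithin α i := by
  by_contra! hgrow
  have hcard : ∀ i ≤ B.nv + 1, i + 1 ≤ (B.reachWithin α i).card := by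
    intro i hi
    induction i with
    | zero => simp
    | succ i ih =>
      have hlt := card_lt_card <|
        (reachWithin_subset_succ i).ssubset_of_ne (hgrow i (by omega)).symm
      have := ih (by omega)
      omega
  have := (hcard (B.nv + 1) le_rfl).trans (card_le_univ _)
  simp at this

lemma reachWithin_subset_reachWithin_nv (i : ℕ) :
    B.reachWithin α i ⊆ B.reachWithin α B.nv := by
  obtain ⟨j, hj, hstab⟩ := exists_reachWithin_succ_eq (B := B) (α := α)
  rcases le_total i j with hij | hji
  · exact reachWithin_mono (hij.trans hj)
  · rw [← Nat.add_sub_cancel' hji, reachWithin_add_eq_of_succ_eq hstab]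
    exact reachWithin_mono hj

lemma reaches_of_mem_reachWithin {v : Fin B.nv} {i : ℕ} (h : v ∈ B.reachWithin α i) :
    ReflTransGen (B.Step α) B.src v := by
  induction i generalizing v with
  | zero => rw [mem_singleton.mp h]
  | succ i ih =>
    rcases mem_reachWithin_succ.mp h with h | ⟨u, hu, huv⟩
    exacts [ih h, (ih hu).tail huv]

lemma exists_mem_reachWithin_of_reaches {v : Fin B.nv} (h : ReflTransGen (B.Step α) B.src v) :
    ∃ i, v ∈ B.reachWithin α i := by
  induction h with
  | refl => exact ⟨0, by simp⟩
  | tail _ hstep ih =>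
    obtain ⟨i, hi⟩ := ih
    exact ⟨i + 1, mem_reachWithin_succ.mpr (.inr ⟨_, hi, hstep⟩)⟩

lemma reaches_iff_mem_reachWithin {v : Fin B.nv} {i : ℕ} (hi : B.nv ≤ i) :
    ReflTransGen (B.Step α) B.src v ↔ v ∈ B.reachWithin α i := by
  refine ⟨fun h => ?_, reaches_of_mem_reachWithin⟩
  obtain ⟨j, hj⟩ := exists_mem_reachWithin_of_reaches h
  exact reachWithin_mono hi (reachWithin_subset_reachWithin_nv j hj)

lemma accepts_iff_tgt_mem_reachWithin {i : ℕ} (hi : B.nv ≤ i) :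
    B.Accepts α ↔ B.tgt ∈ B.reachWithin α i :=
  reaches_iff_mem_reachWithin hi

end ReachWithin

section Gadgets

variable (B : NBP n) (α : Fin n → Bool)

/-- Arcs of the layered copy of `B` with levels `0, …, j`, where a vertex may also wait. -/
def layeredArc (j : ℕ) (x y : Fin B.nv × Fin (j + 1)) (l : BPLabel n) : Prop :=
  (y.2 : ℕ) = x.2 + 1 ∧ (y.1 = x.1 ∧ l = .inl true ∨ (x.1, y.1, l) ∈ B.arcs)

def memReachWithin (j : ℕ) (v : Fin B.nv) : NBP n :=
  ofRel (Fin B.nv × Fin (j + 1)) (B.layeredArc j) (B.src, 0) (v, Fin.last j)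

lemma accepts_memReachWithin (j : ℕ) (v : Fin B.nv) :
    (B.memReachWithin j v).Accepts α ↔ v ∈ B.reachWithin α j := by
  rw [memReachWithin, accepts_ofRel]
  constructor
  · suffices ∀ x, ReflTransGen (Holds α (B.layeredArc j)) (B.src, 0) x →
        x.1 ∈ B.reachWithin α x.2 from
      fun h => by simpa using this _ h
    intro x hx
    induction hx with
    | refl => simp
    | tail _ hstep ih =>
      obtain ⟨l, ⟨hlevel, ⟨hstay, -⟩ | harc⟩, hl⟩ := hstep
      · rw [hlevel, hstay]
        exact reachWithin_subset_succ _ ih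
      · rw [hlevel]
        exact mem_reachWithin_succ.mpr (.inr ⟨_, ih, l, harc, hl⟩)
  · suffices ∀ k (hk : k ≤ j), ∀ w ∈ B.reachWithin α k,
        ReflTransGen (Holds α (B.layeredArc j)) (B.src, 0)
          (w, (⟨k, by omega⟩ : Fin (j + 1))) from
      this j le_rfl v
    intro k hk w hw
    induction k generalizing w with
    | zero => rw [mem_singleton.mp hw]; rfl
    | succ k ih =>
      rcases mem_reachWithin_succ.mp hw with hw | ⟨u, hu, l, harc, hl⟩
      · exact (ih (by omega) w hw).tail ⟨.inl true, ⟨rfl, .inl ⟨rfl, rfl⟩⟩, rfl⟩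
      · exact (ih (by omega) u hu).tail ⟨l, ⟨rfl, .inr harc⟩, hl⟩

lemma nv_memReachWithin (j : ℕ) (v : Fin B.nv) :
    (B.memReachWithin j v).nv = B.nv * (j + 1) := by
  simp [memReachWithin]

def noStep (u v : Fin B.nv) : NBP n :=
  all fun l : {l // (u, v, l) ∈ B.arcs} => lit (neg l.1)

lemma accepts_noStep (u v : Fin B.nv) : (B.noStep u v).Accepts α ↔ ¬ B.Step α u v := by
  simp [noStep, NBP.Step]

lemma nv_noStep_le (u v : Fin B.nv) : (B.noStep u v).nv ≤ 3 * B.arcs.card + 1 := by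
  have hcard : Fintype.card {l // (u, v, l) ∈ B.arcs} ≤ B.arcs.card := by
    simpa using Fintype.card_le_of_injective
      (fun l : {l // (u, v, l) ∈ B.arcs} => (⟨(u, v, l.1), l.2⟩ : B.arcs))
      fun l l' h => Subtype.ext (by simpa using h)
  have := nv_all_le (fun l : {l // (u, v, l) ∈ B.arcs} => lit (neg l.1)) (K := 2) (by simp)
  rw [noStep]
  omega

end Gadgets

section Counting

variable (B : NBP n) (α : Fin n → Bool)

lemma card_reachWithin_lt (i : ℕ) : (B.reachWithin α i).card < B.nv + 1 :=
  Nat.lt_succ_of_le ((card_le_univ _).trans_eq (Fintype.card_fin _))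

/-- The count `c` certifies its guesses `T ⊆ reachWithin i`, so when `c = #(reachWithin i)` the
guesses are all of `reachWithin i`, and checking each of them proves `v ∉ reachWithin (i + 1)`. -/
def notMemReachWithinSucc (i : ℕ) (c : Fin (B.nv + 1)) (v : Fin B.nv) : NBP n :=
  count (fun u => all ![B.memReachWithin i u, const (decide (u ≠ v)), B.noStep u v])
    (fun _ => const true) c

def cardReachWithinSucc (i : ℕ) (c c' : Fin (B.nv + 1)) : NBP n :=
  count (B.memReachWithin (i + 1)) (B.notMemReachWithinSucc i c) c'

variable {B α}

lemma accepts_notMemReachWithinSucc {i : ℕ} {c : Fin (B.nv + 1)}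
    (hc : (c : ℕ) = (B.reachWithin α i).card) (v : Fin B.nv) :
    (B.notMemReachWithinSucc i c v).Accepts α ↔ v ∉ B.reachWithin α (i + 1) := by
  simp only [notMemReachWithinSucc, accepts_count, accepts_all, Fin.forall_fin_succ,
    IsEmpty.forall_iff, Matrix.cons_val_zero, Matrix.cons_val_succ, accepts_lit,
    accepts_memReachWithin, accepts_noStep, litEval, decide_eq_true_eq, and_true,
    implies_true]
  constructor
  · rintro ⟨T, hcard, hT⟩ hv
    have hTeq : T = B.reachWithin α i :=
      eq_of_subset_of_card_le (fun u hu => (hT u hu).1) (by rw [hcard, hc])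
    rcases mem_reachWithin_succ.mp hv with hv | ⟨u, hu, huv⟩
    · exact (hT v (hTeq ▸ hv)).2.1 rfl
    · exact (hT u (hTeq ▸ hu)).2.2 huv
  · intro hv
    refine ⟨B.reachWithin α i, hc.symm, fun u hu => ⟨hu, ?_, ?_⟩⟩
    · rintro rfl
      exact hv (reachWithin_subset_succ i hu)
    · exact fun huv => hv (mem_reachWithin_succ.mpr (.inr ⟨u, hu, huv⟩))

lemma accepts_cardReachWithinSucc {i : ℕ} {c : Fin (B.nv + 1)}
    (hc : (c : ℕ) = (B.reachWithin α i).card) (c' : Fin (B.nv + 1)) :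
    (B.cardReachWithinSucc i c c').Accepts α ↔ (c' : ℕ) = (B.reachWithin α (i + 1)).card := by
  simp only [cardReachWithinSucc, accepts_count, accepts_memReachWithin,
    accepts_notMemReachWithinSucc hc]
  constructor
  · rintro ⟨T, hcard, hT, hnT⟩
    have hTeq : T = B.reachWithin α (i + 1) := by
      ext v
      exact ⟨hT v, fun hv => by_contra fun hvT => hnT v hvT hv⟩
    rw [← hcard, hTeq]
  · intro hc'
    exact ⟨_, hc'.symm, fun _ => id, fun _ => id⟩

end Counting

section Complement

variable (B : NBP n) (α : Fin n → Bool)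

/-- `some (i, c)`: level `i` is reached with `c` certified to be `#(reachWithin i)`. -/
abbrev LevelState := Option (Fin (B.nv + 1) × Fin (B.nv + 1))

/-- `inl (i, c, c')` passes from level `i` to level `i + 1`; `inr c` is the final check. -/
abbrev LevelIdx := (Fin B.nv × Fin (B.nv + 1) × Fin (B.nv + 1)) ⊕ Fin (B.nv + 1)

def levelEntry : B.LevelIdx → B.LevelState :=
  Sum.elim (fun p => some (p.1.castSucc, p.2.1)) fun c => some (Fin.last _, c)

def levelExit : B.LevelIdx → B.LevelState :=
  Sum.elim (fun p => some (p.1.succ, p.2.2)) fun _ => none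

def levelBox : B.LevelIdx → NBP n :=
  Sum.elim (fun p => B.cardReachWithinSucc p.1 p.2.1 p.2.2)
    fun c => B.notMemReachWithinSucc B.nv c B.tgt

def levelStart : B.LevelState := some (0, ⟨1, Nat.succ_lt_succ B.src.pos⟩)

/-- The Immerman–Szelepcsényi inductive-counting program. -/
def complement : NBP n := assemble B.levelEntry B.levelExit B.levelBox B.levelStart none

abbrev LevelStep := OuterStep B.levelEntry B.levelExit B.levelBox α

variable {B α}

lemma val_eq_card_of_reflTransGen_levelStep {x : B.LevelState}
    (h : ReflTransGen (B.LevelStep α) B.levelStart x) {i : Fin (B.nv + 1)} {c : Fin (B.nv + 1)}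
    (hx : x = some (i, c)) : (c : ℕ) = (B.reachWithin α i).card := by
  induction h generalizing i c with
  | refl =>
    obtain ⟨rfl, rfl⟩ := Prod.ext_iff.mp (Option.some_injective _ hx).symm
    simp
  | tail _ hstep ih =>
    obtain ⟨⟨j, d, d'⟩ | d, rfl, rfl, hbox⟩ := hstep
    · simp only [levelExit, Sum.elim_inl, Option.some.injEq, Prod.mk.injEq] at hx
      obtain ⟨rfl, rfl⟩ := hx
      simpa using (accepts_cardReachWithinSucc (ih rfl) _).mp hbox
    · cases hx

lemma reflTransGen_levelStep_card (i : ℕ) (hi : i ≤ B.nv) :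
    ReflTransGen (B.LevelStep α) B.levelStart
      (some (⟨i, by omega⟩, ⟨(B.reachWithin α i).card, card_reachWithin_lt B α i⟩)) := by
  induction i with
  | zero => simp [levelStart]; rfl
  | succ i ih =>
    refine (ih (by omega)).tail ⟨.inl (⟨i, hi⟩, _, _), rfl, rfl, ?_⟩
    exact (accepts_cardReachWithinSucc rfl _).mpr rfl

theorem accepts_complement : B.complement.Accepts α ↔ ¬ B.Accepts α := by
  rw [complement, accepts_assemble, accepts_iff_tgt_mem_reachWithin (Nat.le_succ B.nv)]
  constructor
  · intro h
    obtain ⟨x, hx, ⟨⟨j, d, d'⟩ | c, rfl, hexit, hbox⟩⟩ :=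
      h.cases_tail.resolve_left (by simp [levelStart])
    · cases hexit
    · exact (accepts_notMemReachWithinSucc (val_eq_card_of_reflTransGen_levelStep hx rfl) _).mp
        hbox
  · intro h
    exact (reflTransGen_levelStep_card B.nv le_rfl).tail
      ⟨.inr _, rfl, rfl, (accepts_notMemReachWithinSucc rfl _).mpr h⟩

end Complement

section ComplementSize

variable (B : NBP n)

lemma nv_le_size : B.nv ≤ B.size := Nat.le_add_right _ _

lemma card_arcs_le_size : B.arcs.card ≤ B.size := Nat.le_add_left _ _

lemma nv_memReachWithin_le {j : ℕ} (hj : j ≤ B.nv) (v : Fin B.nv) :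
    (B.memReachWithin j v).nv ≤ (B.size + 1) ^ 2 := by
  rw [nv_memReachWithin, sq]
  have := B.nv_le_size
  gcongr <;> omega

lemma nv_notMemReachWithinSucc_le {i : ℕ} (hi : i ≤ B.nv) (c : Fin (B.nv + 1)) (v : Fin B.nv) :
    (B.notMemReachWithinSucc i c v).nv ≤ 27 * (B.size + 1) ^ 4 := by
  have ht : 1 ≤ B.size + 1 := Nat.succ_pos _
  have ht2 : B.size + 1 ≤ (B.size + 1) ^ 2 := Nat.le_self_pow two_ne_zero _
  have hyes : ∀ u, (all ![B.memReachWithin i u, const (decide (u ≠ v)), B.noStep u v]).nv ≤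
      13 * (B.size + 1) ^ 2 := by
    intro u
    refine (nv_all_le _ (K := 3 * (B.size + 1) ^ 2) fun k => ?_).trans (by simp; omega)
    have := B.nv_memReachWithin_le hi u
    have := B.nv_noStep_le u v
    have := B.card_arcs_le_size
    fin_cases k
    · simp only [Fin.zero_eta, Matrix.cons_val_zero]; omega
    · show (const _ : NBP n).nv ≤ _
      simp only [nv_lit]; omega
    · simp only [Fin.reduceFinMk, Matrix.cons_val]; omega
  refine (nv_count_le _ _ c (K := 13 * (B.size + 1) ^ 2) hyes (fun _ => by simp; omega)).trans ?_
  have := B.nv_le_size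
  calc (B.nv + 1) ^ 2 * (1 + 2 * (13 * (B.size + 1) ^ 2))
      ≤ (B.size + 1) ^ 2 * ((B.size + 1) ^ 2 + 2 * (13 * (B.size + 1) ^ 2)) := by
        gcongr
        omega
    _ = 27 * (B.size + 1) ^ 4 := by ring

lemma nv_cardReachWithinSucc_le {i : ℕ} (hi : i < B.nv) (c c' : Fin (B.nv + 1)) :
    (B.cardReachWithinSucc i c c').nv ≤ 55 * (B.size + 1) ^ 6 := by
  have ht : 1 ≤ (B.size + 1) ^ 2 := Nat.one_le_pow _ _ (Nat.succ_pos _)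
  have h2 : (B.size + 1) ^ 2 ≤ 27 * (B.size + 1) ^ 4 := by
    have := Nat.pow_le_pow_right (n := B.size + 1) (by omega) (show 2 ≤ 4 by norm_num)
    omega
  refine (nv_count_le _ _ c' (K := 27 * (B.size + 1) ^ 4)
    (fun v => (B.nv_memReachWithin_le hi v).trans h2)
    (fun v => B.nv_notMemReachWithinSucc_le hi.le c v)).trans ?_
  have := B.nv_le_size
  calc (B.nv + 1) ^ 2 * (1 + 2 * (27 * (B.size + 1) ^ 4))
      ≤ (B.size + 1) ^ 2 * ((B.size + 1) ^ 4 + 2 * (27 * (B.size + 1) ^ 4)) := by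
        gcongr
        omega
    _ = 55 * (B.size + 1) ^ 6 := by ring

lemma nv_complement_le : B.complement.nv ≤ 112 * (B.size + 1) ^ 9 := by
  obtain ⟨t, ht, hN⟩ : ∃ t, B.size + 1 = t ∧ B.nv + 1 ≤ t :=
    ⟨_, rfl, by have := B.nv_le_size; omega⟩
  have h1 : 1 ≤ t := by omega
  have hK : ∀ k, (B.levelBox k).nv ≤ 55 * t ^ 6 := by
    rintro (⟨j, c, c'⟩ | c)
    · exact ht ▸ B.nv_cardReachWithinSucc_le j.isLt c c'
    · refine (B.nv_notMemReachWithinSucc_le le_rfl c B.tgt).trans ?_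
      rw [ht]
      calc 27 * t ^ 4 ≤ 55 * (t ^ 4 * t ^ 2) := by
            gcongr
            · norm_num
            · exact Nat.le_mul_of_pos_right _ (pow_pos h1 2)
        _ = 55 * t ^ 6 := by ring
  refine (nv_assemble_le _ _ _ _ _ hK).trans ?_
  simp only [Fintype.card_option, Fintype.card_sum, Fintype.card_prod, Fintype.card_fin, ht]
  have ht2 : 1 ≤ t * t := Nat.one_le_iff_ne_zero.mpr (by positivity)
  have ht3 : t ≤ t * (t * t) := Nat.le_mul_of_pos_right _ (by positivity)
  calc (B.nv + 1) * (B.nv + 1) + 1 + (B.nv * ((B.nv + 1) * (B.nv + 1)) + (B.nv + 1)) * (55 * t ^ 6)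
      ≤ t * t + t * t + (t * (t * t) + t * (t * t)) * (55 * t ^ 6) := by
        gcongr <;> omega
    _ = 2 * t ^ 2 + 110 * t ^ 9 := by ring
    _ ≤ 112 * t ^ 9 := by
        have := Nat.pow_le_pow_right h1 (show 2 ≤ 9 by norm_num)
        omega

theorem size_complement_le : B.complement.size ≤ 37632 * (B.size + 1) ^ 18 * (n + 1) :=
  calc B.complement.size ≤ 3 * B.complement.nv ^ 2 * (n + 1) := size_ofRel_le _ _ _ _
    _ ≤ 3 * (112 * (B.size + 1) ^ 9) ^ 2 * (n + 1) := by gcongr; exact B.nv_complement_le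
    _ = 37632 * (B.size + 1) ^ 18 * (n + 1) := by ring

end ComplementSize

end NBP

/-! ### 2-SAT and hypergraph programs of degree 2 -/

section TwoSat

variable {L : Type*} [Fintype L] (r : L → L → Prop)

/-- Comparing ancestor sets colexicographically orders the strongly connected components of `r`
linearly and compatibly with `r`. -/
def sccRank (l : L) : Colex (Finset (Fin (Fintype.card L))) :=
  toColex ((univ.filter fun x => ReflTransGen r x l).map (Fintype.equivFin L).toEmbedding)

/-- `σ` satisfies the 2-CNF whose literals are `L` and whose implications are `r`. -/
def IsClosedAssignment (neg : L → L) (σ : L → Prop) : Prop :=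
  (∀ l, σ (neg l) ↔ ¬ σ l) ∧ ∀ a b, r a b → σ a → σ b

variable {r}

lemma sccRank_mono {a b : L} (h : ReflTransGen r a b) : sccRank r a ≤ sccRank r b :=
  Finset.Colex.toColex_mono <| map_subset_map.mpr fun x hx => by
    simp only [mem_filter, mem_univ, true_and] at hx ⊢
    exact hx.trans h

lemma reflTransGen_of_sccRank_eq {a b : L} (h : sccRank r a = sccRank r b) :
    ReflTransGen r a b := by
  have hanc := map_injective _ (toColex.injective h)
  have : a ∈ univ.filter fun x => ReflTransGen r x b := hanc ▸ (by simp [ReflTransGen.refl])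
  simpa using this

theorem exists_closed_assignment_iff (neg : L → L) (hneg : ∀ l, neg (neg l) = l)
    (hcontra : ∀ a b, r a b → r (neg b) (neg a)) :
    (∃ σ, IsClosedAssignment r neg σ) ↔
      ∀ l, ¬ (ReflTransGen r l (neg l) ∧ ReflTransGen r (neg l) l) := by
  constructor
  · rintro ⟨σ, hσneg, hσr⟩ l ⟨hl, hnl⟩
    have hσ : ∀ {a b}, ReflTransGen r a b → σ a → σ b := fun h => by
      induction h with
      | refl => exact id
      | tail _ hstep ih => exact hσr _ _ hstep ∘ ih
    by_cases hσl : σ l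
    · exact (hσneg l).mp (hσ hl hσl) hσl
    · exact hσl (hσ hnl ((hσneg l).mpr hσl))
  · intro hsep
    have hne : ∀ l, sccRank r (neg l) ≠ sccRank r l := fun l h =>
      hsep l ⟨reflTransGen_of_sccRank_eq h.symm, reflTransGen_of_sccRank_eq h⟩
    refine ⟨fun l => sccRank r (neg l) < sccRank r l, fun l => ?_, fun a b hab ha => ?_⟩
    · simp only [hneg, not_lt]
      exact ⟨le_of_lt, fun h => lt_of_le_of_ne h (hne l).symm⟩
    · calc sccRank r (neg b) ≤ sccRank r (neg a) := sccRank_mono (.single (hcontra a b hab))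
        _ < sccRank r a := ha
        _ ≤ sccRank r b := sccRank_mono (.single hab)

end TwoSat

namespace HGP

variable {n : ℕ}

section Implications

variable (P : HGP n) (α : Fin n → Bool)

def Accepts : Prop :=
  ∃ S ⊆ P.edges, ((S : Set (Finset (Fin P.nv))).Pairwise fun e f => Disjoint e f) ∧
    ∀ v : Fin P.nv, litEval α (P.label v) = false → ∃ e ∈ S, v ∈ e

lemma computes_iff (f : (Fin n → Bool) → Bool) :
    P.Computes f ↔ ∀ α, f α = true ↔ P.Accepts α := Iff.rfl

abbrev Edge := {e // e ∈ P.edges}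

/-- Labelled implications between the literals `(e, b)`, read "`e` is chosen iff `b`": two
chosen hyperedges must not meet, and a vertex labelled `0` must be covered by one of its (at
most two) hyperedges. -/
def implArc (x y : P.Edge × Bool) (l : BPLabel n) : Prop :=
  (x.2 = true ∧ y.2 = false ∧ x.1 ≠ y.1 ∧ (∃ v, v ∈ x.1.1 ∧ v ∈ y.1.1) ∧
    l = .inl true) ∨
  (x.2 = false ∧ y.2 = true ∧ ∃ v, v ∈ x.1.1 ∧ v ∈ y.1.1 ∧
    (x.1 ≠ y.1 ∨ ∀ f : P.Edge, v ∈ f.1 → f = x.1) ∧ l = neg (P.label v))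

def negLit (x : P.Edge × Bool) : P.Edge × Bool := (x.1, !x.2)

variable {P α}

lemma holds_implArc_iff {x y : P.Edge × Bool} :
    Holds α P.implArc x y ↔
      (x.2 = true ∧ y.2 = false ∧ x.1 ≠ y.1 ∧ ∃ v, v ∈ x.1.1 ∧ v ∈ y.1.1) ∨
      (x.2 = false ∧ y.2 = true ∧ ∃ v, v ∈ x.1.1 ∧ v ∈ y.1.1 ∧
        litEval α (P.label v) = false ∧
        (x.1 ≠ y.1 ∨ ∀ f : P.Edge, v ∈ f.1 → f = x.1)) := by
  constructor
  · rintro ⟨l, ⟨hx, hy, hxy, hv, -⟩ | ⟨hx, hy, v, hvx, hvy, hxy, rfl⟩, hl⟩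
    · exact .inl ⟨hx, hy, hxy, hv⟩
    · exact .inr ⟨hx, hy, v, hvx, hvy, by simpa using hl, hxy⟩
  · rintro (⟨hx, hy, hxy, hv⟩ | ⟨hx, hy, v, hvx, hvy, hl, hxy⟩)
    · exact ⟨_, .inl ⟨hx, hy, hxy, hv, rfl⟩, rfl⟩
    · exact ⟨_, .inr ⟨hx, hy, v, hvx, hvy, hxy, rfl⟩, by simp [hl]⟩

lemma holds_implArc_negLit {x y : P.Edge × Bool} (h : Holds α P.implArc x y) :
    Holds α P.implArc (P.negLit y) (P.negLit x) := by
  obtain ⟨x, bx⟩ := x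
  obtain ⟨y, b⟩ := y
  rw [holds_implArc_iff] at h ⊢
  rcases h with ⟨rfl, rfl, hxy, v, hvx, hvy⟩ | ⟨rfl, rfl, v, hvx, hvy, hl, hxy⟩
  · exact .inl ⟨rfl, rfl, Ne.symm hxy, v, hvy, hvx⟩
  · refine .inr ⟨rfl, rfl, v, hvy, hvx, hl, ?_⟩
    rcases hxy with hxy | huniq
    · exact .inl (Ne.symm hxy)
    · exact .inr fun f hf => (huniq f hf).trans (huniq y hvy).symm

lemma eq_or_eq_of_mem_of_degLE_two (hdeg : P.degLE 2) {v : Fin P.nv} {e f g : Finset (Fin P.nv)}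
    (he : e ∈ P.edges) (hf : f ∈ P.edges) (hg : g ∈ P.edges) (hef : e ≠ f) (hve : v ∈ e)
    (hvf : v ∈ f) (hvg : v ∈ g) : g = e ∨ g = f := by
  have hsub : {e, f} ⊆ P.edges.filter (v ∈ ·) := by
    simp [insert_subset_iff, he, hf, hve, hvf]
  have heq := eq_of_subset_of_card_le hsub (by rw [card_pair hef]; exact hdeg v)
  have hg' : g ∈ P.edges.filter (v ∈ ·) := mem_filter.mpr ⟨hg, hvg⟩
  simpa [← heq] using hg'

end Implications

section TwoCNF

variable {P : HGP n} {α : Fin n → Bool}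

lemma isClosedAssignment_of_accepts (hdeg : P.degLE 2) {S : Finset (Finset (Fin P.nv))}
    (hS : S ⊆ P.edges) (hdisj : (S : Set (Finset (Fin P.nv))).Pairwise fun e f => Disjoint e f)
    (hcover : ∀ v, litEval α (P.label v) = false → ∃ e ∈ S, v ∈ e) :
    IsClosedAssignment (Holds α P.implArc) P.negLit fun x => x.1.1 ∈ S ↔ x.2 = true := by
  refine ⟨fun ⟨e, b⟩ => by cases b <;> simp [negLit], ?_⟩
  rintro ⟨x, bx⟩ ⟨y, b⟩ h hx
  rcases holds_implArc_iff.mp h with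
    ⟨rfl, rfl, hxy, v, hvx, hvy⟩ | ⟨rfl, rfl, v, hvx, hvy, hl, hxy⟩
  · simp only [iff_true, Bool.false_eq_true, iff_false] at hx ⊢
    intro hyS
    exact disjoint_left.mp (hdisj hx hyS fun h => hxy (Subtype.ext h)) hvx hvy
  · simp only [Bool.false_eq_true, iff_false, iff_true] at hx ⊢
    obtain ⟨g, hgS, hvg⟩ := hcover v hl
    rcases hxy with hxy | huniq
    · rcases eq_or_eq_of_mem_of_degLE_two hdeg x.2 y.2 (hS hgS) (fun h => hxy (Subtype.ext h))
        hvx hvy hvg with rfl | rfl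
      · exact absurd hgS hx
      · exact hgS
    · exact absurd (congrArg Subtype.val (huniq ⟨g, hS hgS⟩ hvg) ▸ hgS) hx

lemma accepts_of_isClosedAssignment {σ : P.Edge × Bool → Prop}
    (hcover : ∀ v, litEval α (P.label v) = false → ∃ e ∈ P.edges, v ∈ e)
    (hσ : IsClosedAssignment (Holds α P.implArc) P.negLit σ) : P.Accepts α := by
  obtain ⟨hneg, hclosed⟩ := hσ
  have hfalse : ∀ e, ¬ σ (e, true) → σ (e, false) := fun e h => (hneg (e, true)).mpr h
  refine ⟨P.edges.filter fun e => ∃ h : e ∈ P.edges, σ (⟨e, h⟩, true), filter_subset _ _,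
    ?_, ?_⟩
  · intro e he f hf hef
    obtain ⟨-, he, hσe⟩ := mem_filter.mp (mem_coe.mp he)
    obtain ⟨-, hf, hσf⟩ := mem_filter.mp (mem_coe.mp hf)
    refine disjoint_left.mpr fun v hve hvf => ?_
    have := hclosed (⟨e, he⟩, true) (⟨f, hf⟩, false)
      (holds_implArc_iff.mpr
        (.inl ⟨rfl, rfl, fun h => hef (congrArg Subtype.val h), v, hve, hvf⟩))
      hσe
    exact (hneg (⟨f, hf⟩, true)).mp this hσf
  · intro v hv
    obtain ⟨e, he, hve⟩ := hcover v hv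
    by_cases hσe : σ (⟨e, he⟩, true)
    · exact ⟨e, mem_filter.mpr ⟨he, he, hσe⟩, hve⟩
    by_cases hother : ∃ f : P.Edge, v ∈ f.1 ∧ f ≠ ⟨e, he⟩
    · obtain ⟨f, hvf, hfe⟩ := hother
      have := hclosed (⟨e, he⟩, false) (f, true)
        (holds_implArc_iff.mpr (.inr ⟨rfl, rfl, v, hve, hvf, hv, .inl hfe.symm⟩))
        (hfalse _ hσe)
      exact ⟨f.1, mem_filter.mpr ⟨f.2, f.2, this⟩, hvf⟩
    · push Not at hother
      exact absurd (hclosed (⟨e, he⟩, false) (⟨e, he⟩, true)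
        (holds_implArc_iff.mpr (.inr ⟨rfl, rfl, v, hve, hve, hv, .inr hother⟩))
        (hfalse _ hσe)) hσe

theorem not_accepts_iff (hdeg : P.degLE 2) :
    ¬ P.Accepts α ↔ (∃ v, litEval α (P.label v) = false ∧ ∀ e ∈ P.edges, v ∉ e) ∨
      ∃ e : P.Edge, ReflTransGen (Holds α P.implArc) (e, true) (e, false) ∧
        ReflTransGen (Holds α P.implArc) (e, false) (e, true) := by
  have h2sat := exists_closed_assignment_iff (r := Holds α P.implArc) P.negLit
    (fun x => by simp [negLit]) fun _ _ => holds_implArc_negLit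
  constructor
  · intro hrej
    by_contra! hsat
    obtain ⟨hcover, hsep⟩ := hsat
    refine hrej (accepts_of_isClosedAssignment (fun v hv => ?_) (h2sat.mpr ?_).choose_spec)
    · by_contra! h
      exact absurd (hcover v hv) (by simpa using h)
    · rintro ⟨e, _ | _⟩ ⟨h1, h2⟩
      exacts [hsep e h2 h1, hsep e h1 h2]
  · rintro (⟨v, hv, hnot⟩ | ⟨e, h1, h2⟩) ⟨S, hS, hdisj, hcover⟩
    · obtain ⟨e, heS, hve⟩ := hcover v hv
      exact hnot e (hS heS) hve
    · exact h2sat.mp ⟨_, isClosedAssignment_of_accepts hdeg hS hdisj hcover⟩ (e, true)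
        ⟨h1, h2⟩

end TwoCNF

section Rejecter

variable (P : HGP n)

def rejecterBox : Fin P.nv ⊕ P.Edge → NBP n :=
  Sum.elim
    (fun v => if ∀ e ∈ P.edges, v ∉ e then NBP.lit (neg (P.label v)) else NBP.const false)
    fun e => NBP.all
      ![NBP.ofRel _ P.implArc (e, true) (e, false), NBP.ofRel _ P.implArc (e, false) (e, true)]

def rejecter : NBP n := NBP.any P.rejecterBox

theorem accepts_rejecter (hdeg : P.degLE 2) (α : Fin n → Bool) :
    P.rejecter.Accepts α ↔ ¬ P.Accepts α := by
  rw [not_accepts_iff hdeg]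
  simp only [rejecter, rejecterBox, NBP.accepts_any, Sum.exists, Sum.elim_inl, Sum.elim_inr,
    NBP.accepts_all, Fin.forall_fin_two, Matrix.cons_val_zero, Matrix.cons_val_one,
    NBP.accepts_ofRel]
  refine or_congr (exists_congr fun v => ?_) Iff.rfl
  split_ifs with h
  · simpa using fun _ => h
  · simp [h, litEval]

theorem size_rejecter_le : P.rejecter.size ≤ 243 * (P.size + 1) ^ 4 * (n + 1) := by
  have hE : Fintype.card P.Edge = P.edges.card := Fintype.card_coe _
  have hK : ∀ i, (P.rejecterBox i).nv ≤ 4 * P.edges.card + 3 := by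
    rintro (v | e)
    · simp only [rejecterBox, Sum.elim_inl]
      split_ifs <;> simp
    · refine (NBP.nv_all_le _ (K := 2 * P.edges.card) fun k => ?_).trans (by simp; omega)
      fin_cases k <;> simp [hE, mul_comm]
  have hnv : P.rejecter.nv ≤ 9 * (P.size + 1) ^ 2 := by
    refine (NBP.nv_any_le _ hK).trans ?_
    simp only [Fintype.card_sum, Fintype.card_fin, hE]
    have : P.nv + P.edges.card = P.size := rfl
    nlinarith
  calc P.rejecter.size ≤ 3 * P.rejecter.nv ^ 2 * (n + 1) := NBP.size_ofRel_le _ _ _ _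
    _ ≤ 3 * (9 * (P.size + 1) ^ 2) ^ 2 * (n + 1) := by gcongr
    _ = 243 * (P.size + 1) ^ 4 * (n + 1) := by ring

end Rejecter

end HGP

/-! ### Non-reachability as a hypergraph program of degree 2 -/

namespace HGP

variable {n : ℕ}

section OfEnds

variable {V ε : Type} [Fintype V] [Fintype ε] (ends : V → ε × ε) (label : V → BPLabel n)

/-- Besides the vertices `V`, a private vertex `inr i` labelled `1` in hyperedge `i` alone; it
makes distinct indices give distinct hyperedges. -/
def tagEnds : V ⊕ ε → ε × ε := Sum.elim ends fun i => (i, i)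

def tagLabel : V ⊕ ε → BPLabel n := Sum.elim label fun _ => .inl true

def hyperedge (i : ε) : Finset (Fin (Fintype.card (V ⊕ ε))) :=
  univ.filter fun x =>
    i = (tagEnds ends ((Fintype.equivFin _).symm x)).1 ∨
      i = (tagEnds ends ((Fintype.equivFin _).symm x)).2

/-- The HGP of degree at most 2 in which the vertex `x` lies in the hyperedges `ends x`. -/
def ofEnds : HGP n where
  nv := Fintype.card (V ⊕ ε)
  edges := univ.image (hyperedge ends)
  label x := tagLabel label ((Fintype.equivFin _).symm x)

variable {ends}

lemma mem_hyperedge {i : ε} {x : Fin (Fintype.card (V ⊕ ε))} :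
    x ∈ hyperedge ends i ↔ i = (tagEnds ends ((Fintype.equivFin _).symm x)).1 ∨
      i = (tagEnds ends ((Fintype.equivFin _).symm x)).2 := by
  simp [hyperedge]

lemma equivFin_mem_hyperedge {i : ε} {y : V ⊕ ε} :
    Fintype.equivFin _ y ∈ hyperedge ends i ↔
      i = (tagEnds ends y).1 ∨ i = (tagEnds ends y).2 := by
  simp [mem_hyperedge]

lemma hyperedge_injective : Function.Injective (hyperedge ends) := fun i j h => by
  have : Fintype.equivFin _ (.inr i) ∈ hyperedge ends i := by
    simp [equivFin_mem_hyperedge, tagEnds]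
  simpa [h, equivFin_mem_hyperedge, tagEnds, eq_comm] using this

lemma degLE_ofEnds : (ofEnds ends label).degLE 2 := by
  intro x
  set y := (Fintype.equivFin (V ⊕ ε)).symm x
  calc ((ofEnds ends label).edges.filter (x ∈ ·)).card
      ≤ (({(tagEnds ends y).1, (tagEnds ends y).2} : Finset ε).image (hyperedge ends)).card := by
        refine card_le_card fun E hE => ?_
        obtain ⟨hE, hxE⟩ := mem_filter.mp hE
        obtain ⟨i, -, rfl⟩ := mem_image.mp hE
        exact mem_image.mpr ⟨i, by simpa using mem_hyperedge.mp hxE, rfl⟩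
    _ ≤ 2 := card_image_le.trans (card_le_two)

lemma size_ofEnds_le : (ofEnds ends label).size ≤ Fintype.card V + 2 * Fintype.card ε := by
  have : (univ.image (hyperedge ends)).card ≤ Fintype.card ε := card_image_le
  simp only [HGP.size, ofEnds, Fintype.card_sum]
  omega

theorem accepts_ofEnds_iff (α : Fin n → Bool) :
    (ofEnds ends label).Accepts α ↔ ∃ σ : ε → Prop,
      (∀ x, (ends x).1 ≠ (ends x).2 → ¬ (σ (ends x).1 ∧ σ (ends x).2)) ∧
      ∀ x, litEval α (label x) = false → σ (ends x).1 ∨ σ (ends x).2 := by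
  have hlabel : ∀ y, (ofEnds ends label).label (Fintype.equivFin _ y) = tagLabel label y := by
    simp [ofEnds]
  constructor
  · rintro ⟨S, hS, hdisj, hcover⟩
    refine ⟨fun i => hyperedge ends i ∈ S, fun x hne ⟨h1, h2⟩ => ?_, fun x hx => ?_⟩
    · exact disjoint_left.mp (hdisj h1 h2 (hyperedge_injective.ne hne))
        ((equivFin_mem_hyperedge (y := .inl x)).mpr (.inl rfl))
        ((equivFin_mem_hyperedge (y := .inl x)).mpr (.inr rfl))
    · obtain ⟨E, hES, hxE⟩ := hcover (Fintype.equivFin _ (.inl x)) (by rwa [hlabel])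
      obtain ⟨i, -, rfl⟩ := mem_image.mp (hS hES)
      rcases equivFin_mem_hyperedge.mp hxE with rfl | rfl
      exacts [.inl hES, .inr hES]
  · rintro ⟨σ, hsep, hcover⟩
    refine ⟨(univ.filter σ).image (hyperedge ends), image_subset_image (subset_univ _), ?_, ?_⟩
    · intro E hE F hF hij
      obtain ⟨i, hi, rfl⟩ := mem_image.mp (mem_coe.mp hE)
      obtain ⟨j, hj, rfl⟩ := mem_image.mp (mem_coe.mp hF)
      replace hi := (mem_filter.mp hi).2
      replace hj := (mem_filter.mp hj).2
      refine disjoint_left.mpr fun z hzi hzj => ?_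
      have hne : i ≠ j := fun h => hij (h ▸ rfl)
      obtain ⟨y, rfl⟩ := (Fintype.equivFin _).surjective z
      rw [equivFin_mem_hyperedge] at hzi hzj
      rcases y with x | k
      · rcases hzi with rfl | rfl <;> rcases hzj with rfl | rfl
        · exact hne rfl
        · exact hsep x hne ⟨hi, hj⟩
        · exact hsep x hne.symm ⟨hj, hi⟩
        · exact hne rfl
      · simp only [tagEnds, Sum.elim_inr, or_self] at hzi hzj
        exact hne (hzi.trans hzj.symm)
    · intro z hz
      obtain ⟨y, rfl⟩ := (Fintype.equivFin _).surjective z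
      rw [hlabel] at hz
      rcases y with x | k
      · rcases hcover x hz with h | h
        · exact ⟨_, mem_image_of_mem _ (mem_filter.mpr ⟨mem_univ _, h⟩),
            (equivFin_mem_hyperedge (y := .inl x)).mpr (.inl rfl)⟩
        · exact ⟨_, mem_image_of_mem _ (mem_filter.mpr ⟨mem_univ _, h⟩),
            (equivFin_mem_hyperedge (y := .inl x)).mpr (.inr rfl)⟩
      · simp [tagLabel, litEval] at hz

end OfEnds

end HGP

namespace NBP

variable {n : ℕ} (B : NBP n)

abbrev Arc := {a // a ∈ B.arcs}

abbrev NonReachVertex := Fin B.nv ⊕ Bool ⊕ B.Arc × Fin 3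

abbrev NonReachEdge := (Fin B.nv × Bool) ⊕ (B.Arc × Bool)

/-- Hyperedge `inl (v, b)` asserts "`v` is reachable iff `b`"; hyperedge `inr (a, b)` covers
the vertex `(a, 0)`, labelled by the negated label of `a`, when "the source of `a` is reachable
iff `b`". The vertex `inr (inl false)` forces the source to be reachable and `inr (inl true)`
forces the target not to be; `(a, 1)` and `(a, 2)` propagate reachability along `a`. -/
def nonReachEnds : B.NonReachVertex → B.NonReachEdge × B.NonReachEdge
  | .inl v => (.inl (v, true), .inl (v, false))
  | .inr (.inl false) => (.inl (B.src, true), .inl (B.src, true))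
  | .inr (.inl true) => (.inl (B.tgt, false), .inl (B.tgt, false))
  | .inr (.inr (a, 0)) => (.inr (a, false), .inr (a, true))
  | .inr (.inr (a, 1)) => (.inl (a.1.1, true), .inr (a, false))
  | .inr (.inr (a, 2)) => (.inl (a.1.2.1, false), .inr (a, true))

def nonReachLabel : B.NonReachVertex → BPLabel n
  | .inr (.inr (a, 0)) => neg a.1.2.2
  | .inr (.inr (_, 1)) => .inl true
  | .inr (.inr (_, 2)) => .inl true
  | _ => .inl false

def nonReachHGP : HGP n := HGP.ofEnds B.nonReachEnds B.nonReachLabel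

variable {B} {α : Fin n → Bool}

lemma not_accepts_of_separated {σ : B.NonReachEdge → Prop}
    (hsep : ∀ x, (B.nonReachEnds x).1 ≠ (B.nonReachEnds x).2 →
      ¬ (σ (B.nonReachEnds x).1 ∧ σ (B.nonReachEnds x).2))
    (hcover : ∀ x, litEval α (B.nonReachLabel x) = false →
      σ (B.nonReachEnds x).1 ∨ σ (B.nonReachEnds x).2) :
    ¬ B.Accepts α := by
  have hvertex : ∀ v, σ (.inl (v, true)) ↔ ¬ σ (.inl (v, false)) := fun v =>
    ⟨fun h1 h2 => hsep (.inl v) (by simp [nonReachEnds]) ⟨h1, h2⟩,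
      (hcover (.inl v) rfl).resolve_right⟩
  have hsrc : σ (.inl (B.src, true)) := (hcover (.inr (.inl false)) rfl).elim id id
  have htgt : σ (.inl (B.tgt, false)) := (hcover (.inr (.inl true)) rfl).elim id id
  have hstep : ∀ u v, B.Step α u v → σ (.inl (u, true)) → σ (.inl (v, true)) := by
    rintro u v ⟨l, harc, hl⟩ hu
    set a : B.Arc := ⟨(u, v, l), harc⟩
    have h0 := hcover (.inr (.inr (a, 0))) (by simp [nonReachLabel, a, hl])
    have h1 := hsep (.inr (.inr (a, 1))) (by simp [nonReachEnds])
    have h2 := hsep (.inr (.inr (a, 2))) (by simp [nonReachEnds])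
    simp only [nonReachEnds] at h0 h1 h2
    exact (hvertex v).mpr fun hv => h2 ⟨hv, h0.resolve_left fun h => h1 ⟨hu, h⟩⟩
  have hreach : ∀ v, ReflTransGen (B.Step α) B.src v → σ (.inl (v, true)) := fun v h => by
    induction h with
    | refl => exact hsrc
    | tail _ huv ih => exact hstep _ _ huv ih
  exact fun h => (hvertex B.tgt).mp (hreach _ h) htgt

theorem accepts_nonReachHGP : B.nonReachHGP.Accepts α ↔ ¬ B.Accepts α := by
  rw [nonReachHGP, HGP.accepts_ofEnds_iff]
  refine ⟨fun ⟨σ, hsep, hcover⟩ => not_accepts_of_separated hsep hcover, fun hnot => ?_⟩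
  set R := ReflTransGen (B.Step α) B.src
  have harc : ∀ a : B.Arc, litEval α a.1.2.2 = true → R a.1.1 → R a.1.2.1 :=
    fun a hl hu => hu.tail ⟨_, a.2, hl⟩
  refine ⟨Sum.elim (fun p => R p.1 ↔ p.2 = true)
    (fun p => litEval α p.1.1.2.2 = true ∧ (R p.1.1.1 ↔ p.2 = true)), ?_, ?_⟩
  · rintro (v | b | ⟨a, j⟩)
    · simp [nonReachEnds]
    · cases b <;> simp [nonReachEnds]
    · have := harc a
      fin_cases j <;> simp [nonReachEnds] <;> tauto
  · rintro (v | b | ⟨a, j⟩) hx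
    · simp [nonReachEnds]; tauto
    · cases b
      · simpa [nonReachEnds, R] using ReflTransGen.refl
      · simpa [nonReachEnds] using show ¬ R B.tgt from hnot
    · fin_cases j
      · have hl : litEval α a.1.2.2 = true := by simpa [nonReachLabel] using hx
        simp [nonReachEnds, hl, em']
      · simp [nonReachLabel, litEval] at hx
      · simp [nonReachLabel, litEval] at hx

variable (B)

lemma degLE_nonReachHGP : B.nonReachHGP.degLE 2 := HGP.degLE_ofEnds _

lemma size_nonReachHGP_le : B.nonReachHGP.size ≤ 7 * B.size + 2 := by
  refine (HGP.size_ofEnds_le _).trans ?_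
  simp only [Fintype.card_sum, Fintype.card_prod, Fintype.card_fin, Fintype.card_bool,
    Fintype.card_coe, NBP.size]
  omega

end NBP

/-! ### Polynomial size -/

def PolyBounded (s : ℕ → ℕ) : Prop := ∃ c k : ℕ, ∀ n, s n ≤ c * (n + 1) ^ k

namespace PolyBounded

variable {s t : ℕ → ℕ}

lemma of_le (ht : PolyBounded t) (hst : ∀ n, s n ≤ t n) : PolyBounded s :=
  let ⟨c, k, h⟩ := ht
  ⟨c, k, fun n => (hst n).trans (h n)⟩

lemma const (c : ℕ) : PolyBounded fun _ => c := ⟨c, 0, by simp⟩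

lemma succ : PolyBounded fun n => n + 1 := ⟨1, 1, by simp⟩

lemma add (hs : PolyBounded s) (ht : PolyBounded t) : PolyBounded fun n => s n + t n := by
  obtain ⟨c, k, hs⟩ := hs
  obtain ⟨d, l, ht⟩ := ht
  refine ⟨c + d, k + l, fun n => ?_⟩
  have h1 : (n + 1) ^ k ≤ (n + 1) ^ (k + l) := Nat.pow_le_pow_right n.succ_pos (by omega)
  have h2 : (n + 1) ^ l ≤ (n + 1) ^ (k + l) := Nat.pow_le_pow_right n.succ_pos (by omega)
  calc s n + t n ≤ c * (n + 1) ^ (k + l) + d * (n + 1) ^ (k + l) := by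
        gcongr
        exacts [(hs n).trans (Nat.mul_le_mul_left c h1), (ht n).trans (Nat.mul_le_mul_left d h2)]
    _ = (c + d) * (n + 1) ^ (k + l) := by ring

lemma mul (hs : PolyBounded s) (ht : PolyBounded t) : PolyBounded fun n => s n * t n := by
  obtain ⟨c, k, hs⟩ := hs
  obtain ⟨d, l, ht⟩ := ht
  exact ⟨c * d, k + l, fun n => (Nat.mul_le_mul (hs n) (ht n)).trans_eq (by ring)⟩

lemma pow (hs : PolyBounded s) (m : ℕ) : PolyBounded fun n => s n ^ m := by
  induction m with
  | zero => simpa using const 1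
  | succ m ih => simpa [pow_succ] using ih.mul hs

end PolyBounded

lemma exists_hgp_family_of_nbp_family {f : ∀ n : ℕ, (Fin n → Bool) → Bool}
    (B : ∀ n, NBP n) (hB : PolyBounded fun n => (B n).size) (hBf : ∀ n, (B n).Computes (f n)) :
    ∃ c k : ℕ, ∀ n : ℕ, ∃ P : HGP n,
      P.degLE 2 ∧ P.size ≤ c * (n + 1) ^ k ∧ P.Computes (f n) := by
  have hbound : PolyBounded fun n => 7 * (37632 * ((B n).size + 1) ^ 18 * (n + 1)) + 2 :=
    ((PolyBounded.const 7).mul (((PolyBounded.const 37632).mul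
      ((hB.add (.const 1)).pow 18)).mul .succ)).add (.const 2)
  obtain ⟨c, k, hsize⟩ := hbound.of_le fun n =>
    ((B n).complement.size_nonReachHGP_le).trans (by gcongr; exact (B n).size_complement_le)
  refine ⟨c, k, fun n => ⟨_, (B n).complement.degLE_nonReachHGP, hsize n,
    (HGP.computes_iff _ _).mpr fun α => ((NBP.computes_iff _ _).mp (hBf n) α).trans ?_⟩⟩
  rw [NBP.accepts_nonReachHGP, NBP.accepts_complement, not_not]

lemma exists_nbp_family_of_hgp_family {f : ∀ n : ℕ, (Fin n → Bool) → Bool}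
    (P : ∀ n, HGP n) (hdeg : ∀ n, (P n).degLE 2) (hP : PolyBounded fun n => (P n).size)
    (hPf : ∀ n, (P n).Computes (f n)) :
    ∃ c k : ℕ, ∀ n : ℕ, ∃ B : NBP n, B.size ≤ c * (n + 1) ^ k ∧ B.Computes (f n) := by
  have hrej : PolyBounded fun n => 243 * ((P n).size + 1) ^ 4 * (n + 1) :=
    ((PolyBounded.const 243).mul ((hP.add (.const 1)).pow 4)).mul .succ
  have hbound : PolyBounded fun n => 37632 * ((P n).rejecter.size + 1) ^ 18 * (n + 1) :=
    ((PolyBounded.const 37632).mul (((hrej.of_le fun n => (P n).size_rejecter_le).add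
      (.const 1)).pow 18)).mul .succ
  obtain ⟨c, k, hsize⟩ := hbound.of_le fun n => (P n).rejecter.size_complement_le
  refine ⟨c, k, fun n => ⟨_, hsize n,
    (NBP.computes_iff _ _).mpr fun α => ((HGP.computes_iff _ _).mp (hPf n) α).trans ?_⟩⟩
  rw [NBP.accepts_complement, HGP.accepts_rejecter _ (hdeg n), not_not]

end

/-- `HGP² = NL/poly` as non-uniform classes: a family of Boolean functions is
computable by polynomial-size nondeterministic branching programs iff it is computable by
polynomial-size hypergraph programs of degree at most 2. -/
theorem stmt_10 (f : ∀ n : ℕ, (Fin n → Bool) → Bool) :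
    (∃ c k : ℕ, ∀ n : ℕ, ∃ B : NBP n, B.size ≤ c * (n + 1) ^ k ∧ B.Computes (f n)) ↔
    (∃ c k : ℕ, ∀ n : ℕ, ∃ P : HGP n, P.degLE 2 ∧ P.size ≤ c * (n + 1) ^ k ∧
        P.Computes (f n)) := by
  constructor
  · rintro ⟨c, k, hB⟩
    choose B hBsize hBf using hB
    exact exists_hgp_family_of_nbp_family B ⟨c, k, hBsize⟩ hBf
  · rintro ⟨c, k, hP⟩
    choose P hdeg hPsize hPf using hP
    exact exists_nbp_family_of_hgp_family P hdeg ⟨c, k, hPsize⟩ hPf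
end

section
/- There is no independent set I of vertices in a forest D (with 0/1-labelled vertices and edges) such that I contains all vertices labelled 0 and every edge labelled 0 has exactly one endpoint in I, if and only if D contains a path e₀, e₁, …, e_k of odd length k such that e₀ and e_k are labelled 0 and every edge {e_{i−1}, e_i} with even i is labelled 0. -/
/-!
Call a walk alternating if its 2nd, 4th, … edges are labelled 0, and let `Z` be a set of vertices
forced into `I`. Every vertex reached from `Z` by an even alternating walk is forced into `I` as
well, and this set of vertices is independent as long as no odd alternating walk joins two
vertices of `Z`. Enlarge `Z` to a maximal set with no such odd walk. Then the set reached from `Z`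
meets every 0-edge `uv`: otherwise `u` could be added to `Z`, because an odd alternating walk
through `u` either is closed (impossible, a forest being bipartite) or extends across `uv` to an
even alternating walk reaching `v`. Finally, in a forest a walk without backtracking is a path,
and cancelling a backtrack `w u w` shifts later positions by two, so an odd alternating walk
shortens to an odd alternating path.
-/

namespace LabelledForest

section List

variable {α : Type*} (lab : α → Bool)

/-- The offset `n` is the position at which `l` starts inside a longer list. -/
def ZeroAtOdd (n : ℕ) (l : List α) : Prop :=
  ∀ i (hi : i < l.length), Odd (n + i) → lab l[i] = false

variable {lab} {n m : ℕ} {l l₁ l₂ : List α}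

lemma zeroAtOdd_congr (h : n % 2 = m % 2) : ZeroAtOdd lab n l ↔ ZeroAtOdd lab m l := by
  have (i : ℕ) : Odd (n + i) ↔ Odd (m + i) := by simp only [Nat.odd_iff]; omega
  simp only [ZeroAtOdd, this]

lemma zeroAtOdd_append :
    ZeroAtOdd lab n (l₁ ++ l₂) ↔ ZeroAtOdd lab n l₁ ∧ ZeroAtOdd lab (n + l₁.length) l₂ := by
  constructor
  · intro h
    refine ⟨fun i hi hodd => ?_, fun i hi hodd => ?_⟩
    · have := h i (by rw [List.length_append]; omega) hodd
      rwa [List.getElem_append_left hi] at this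
    · have := h (l₁.length + i) (by rw [List.length_append]; omega) (by rwa [← add_assoc])
      simpa [List.getElem_append_right] using this
  · rintro ⟨h₁, h₂⟩ i hi hodd
    rw [List.getElem_append]
    split_ifs with hi₁
    · exact h₁ i hi₁ hodd
    · exact h₂ (i - l₁.length) (by rw [List.length_append] at hi; omega)
        (by rwa [add_assoc, Nat.add_sub_cancel' (by omega)])

lemma zeroAtOdd_reverse : ZeroAtOdd lab n l.reverse ↔ ZeroAtOdd lab (n + l.length + 1) l := by
  have key (i : ℕ) (hi : i < l.length) :
      Odd (n + (l.length - 1 - i)) ↔ Odd (n + l.length + 1 + i) := by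
    simp only [Nat.odd_iff]; omega
  constructor
  · intro h i hi hodd
    have := h (l.length - 1 - i) (by rw [List.length_reverse]; omega) ((key i hi).mpr hodd)
    simpa [List.getElem_reverse, show l.length - 1 - (l.length - 1 - i) = i by omega] using this
  · intro h i hi hodd
    rw [List.length_reverse] at hi
    have hi' : l.length - 1 - (l.length - 1 - i) = i := by omega
    rw [List.getElem_reverse]
    exact h _ (by omega) ((key _ (by omega)).mp (by rwa [hi']))

lemma zeroAtOdd_singleton {a : α} : ZeroAtOdd lab n [a] ↔ (Odd n → lab a = false) := by
  simp [ZeroAtOdd]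

lemma ZeroAtOdd.take (h : ZeroAtOdd lab n l) (i : ℕ) : ZeroAtOdd lab n (l.take i) :=
  (zeroAtOdd_append.mp ((List.take_append_drop i l).symm ▸ h)).1

lemma ZeroAtOdd.drop (h : ZeroAtOdd lab n l) {i : ℕ} (hi : i ≤ l.length) :
    ZeroAtOdd lab (n + i) (l.drop i) := by
  have := (zeroAtOdd_append.mp ((List.take_append_drop i l).symm ▸ h)).2
  rwa [List.length_take, min_eq_left hi] at this

end List

section Graph

open SimpleGraph

variable {V : Type*} {G : SimpleGraph V} {le : Sym2 V → Bool}

lemma getElem_edges_eq_getVert {u v : V} (p : G.Walk u v) {i : ℕ} (hi : i < p.edges.length) :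
    p.edges[i] = s(p.getVert i, p.getVert (i + 1)) := by
  induction p generalizing i with
  | nil => simp at hi
  | cons h p ih =>
    cases i with
    | zero => simp
    | succ i =>
      have hi' : i < p.edges.length := by
        simp only [Walk.edges_cons, List.length_cons] at hi; omega
      simpa using ih hi'

lemma getVert_add_two_of_getElem_edges_eq {u v : V} (p : G.Walk u v) {i : ℕ}
    (hi : i + 1 < p.edges.length) (h : p.edges[i] = p.edges[i + 1]) :
    p.getVert (i + 2) = p.getVert i := by
  rw [getElem_edges_eq_getVert, getElem_edges_eq_getVert] at h
  have hne : p.getVert i ≠ p.getVert (i + 1) := (p.adj_getVert_succ (by rw [Walk.length_edges] at hi; omega)).ne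
  rcases Sym2.eq_iff.mp h with ⟨h₁, -⟩ | ⟨h₁, -⟩
  · exact absurd h₁ hne
  · exact h₁.symm

theorem exists_isPath_zeroAtOdd (hG : G.IsAcyclic) {a b : V} (p : G.Walk a b)
    (hp : ZeroAtOdd le 0 p.edges) :
    ∃ q : G.Walk a b, q.IsPath ∧ ZeroAtOdd le 0 q.edges ∧ q.length % 2 = p.length % 2 := by
  induction hn : p.length using Nat.strong_induction_on generalizing p with
  | _ n ih =>
    by_cases hpath : p.IsPath
    · exact ⟨p, hpath, hp, by rw [hn]⟩
    obtain ⟨i, hi, hrep⟩ := List.exists_not_getElem_of_not_isChain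
      (mt (hG.isPath_iff_isChain p).mpr hpath)
    have hlen : i + 2 ≤ p.length := by rw [Walk.length_edges] at hi; omega
    let q : G.Walk a b := (p.take i).append
      ((p.drop (i + 2)).copy (getVert_add_two_of_getElem_edges_eq p hi (not_not.mp hrep)) rfl)
    have hq_edges : q.edges = p.edges.take i ++ p.edges.drop (i + 2) := by
      simp [q, Walk.edges_append, Walk.edges_take, Walk.edges_drop]
    have hq_len : q.length = p.length - 2 := by
      simp only [q, Walk.length_append, Walk.take_length, Walk.length_copy, Walk.drop_length]
      omega
    have hq : ZeroAtOdd le 0 q.edges := by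
      rw [hq_edges, zeroAtOdd_append]
      refine ⟨hp.take i, ?_⟩
      rw [zeroAtOdd_congr (m := 0 + (i + 2)) (by rw [List.length_take]; omega)]
      exact hp.drop (by rw [Walk.length_edges]; omega)
    obtain ⟨r, hr, hr_alt, hr_len⟩ := ih q.length (by omega) q hq rfl
    exact ⟨r, hr, hr_alt, by omega⟩

variable (G le) in
def evenAltReach (Z : Set V) : Set V :=
  {v | ∃ z ∈ Z, ∃ p : G.Walk z v, Even p.length ∧ ZeroAtOdd le 0 p.edges}

variable (G le) in
def HasOddAltWalk (Z : Set V) : Prop :=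
  ∃ a ∈ Z, ∃ b ∈ Z, ∃ p : G.Walk a b, Odd p.length ∧ ZeroAtOdd le 0 p.edges

variable {Z : Set V}

lemma subset_evenAltReach : Z ⊆ evenAltReach G le Z :=
  fun z hz => ⟨z, hz, .nil, Even.zero, fun i hi => by simp at hi⟩

lemma mem_evenAltReach_of_odd {z u v : V} (hz : z ∈ Z) (p : G.Walk z u) (hodd : Odd p.length)
    (hp : ZeroAtOdd le 0 p.edges) (huv : G.Adj u v) (hle : le s(u, v) = false) :
    v ∈ evenAltReach G le Z := by
  refine ⟨z, hz, p.concat huv, by simpa using hodd.add_one, ?_⟩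
  rw [Walk.edges_concat, List.concat_eq_append, zeroAtOdd_append, zeroAtOdd_singleton]
  exact ⟨hp, fun _ => hle⟩

lemma hasOddAltWalk_of_adj {u w : V} (hu : u ∈ evenAltReach G le Z)
    (hw : w ∈ evenAltReach G le Z) (huw : G.Adj u w) : HasOddAltWalk G le Z := by
  obtain ⟨a, ha, p, hp_even, hp⟩ := hu
  obtain ⟨b, hb, q, hq_even, hq⟩ := hw
  refine ⟨a, ha, b, hb, p.append (q.concat huw.symm).reverse, ?_, ?_⟩
  · simpa using hp_even.add_odd hq_even.add_one
  · rw [Walk.edges_append, Walk.edges_reverse, Walk.edges_concat, List.concat_eq_append,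
      zeroAtOdd_append, zeroAtOdd_reverse, zeroAtOdd_append, zeroAtOdd_singleton]
    rw [Nat.even_iff] at hp_even hq_even
    simp only [Walk.length_edges, List.length_append, List.length_singleton]
    exact ⟨hp, (zeroAtOdd_congr (by omega)).mpr hq,
      fun h => absurd (Nat.odd_iff.mp h) (by omega)⟩

lemma not_hasOddAltWalk_insert (hG : G.IsAcyclic) (hZ : ¬HasOddAltWalk G le Z) {u v : V}
    (huv : G.Adj u v) (hle : le s(u, v) = false) (hv : v ∉ evenAltReach G le Z) :
    ¬HasOddAltWalk G le (insert u Z) := by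
  rintro ⟨a, ha, b, hb, p, hodd, hp⟩
  rcases ha with rfl | ha <;> rcases hb with rfl | hb
  · exact Nat.not_odd_iff_even.mpr
      (two_colorable_iff_forall_loop_even.mp hG.colorable_two _ p) hodd
  · refine hv (mem_evenAltReach_of_odd hb p.reverse (by simpa using hodd) ?_ huv hle)
    rw [Nat.odd_iff] at hodd
    rwa [Walk.edges_reverse, zeroAtOdd_reverse,
      zeroAtOdd_congr (m := 0) (by rw [Walk.length_edges]; omega)]
  · exact hv (mem_evenAltReach_of_odd ha p hodd hp huv hle)
  · exact hZ ⟨a, ha, b, hb, p, hodd, hp⟩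

theorem exists_independent_superset_of_not_hasOddAltWalk [Finite V] (hG : G.IsAcyclic)
    {Z₀ : Set V} (h : ¬HasOddAltWalk G le Z₀) :
    ∃ I : Set V, Z₀ ⊆ I ∧ (∀ u ∈ I, ∀ w ∈ I, ¬G.Adj u w) ∧
      ∀ u w, G.Adj u w → le s(u, w) = false → (u ∈ I ↔ w ∉ I) := by
  obtain ⟨Z, hZ₀, hmax⟩ := Finite.exists_le_maximal (p := fun Z => ¬HasOddAltWalk G le Z) h
  have hind : ∀ u ∈ evenAltReach G le Z, ∀ w ∈ evenAltReach G le Z, ¬G.Adj u w :=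
    fun u hu w hw huw => hmax.prop (hasOddAltWalk_of_adj hu hw huw)
  refine ⟨evenAltReach G le Z, hZ₀.trans subset_evenAltReach, hind,
    fun u w huw hle => ⟨fun hu hw => hind u hu w hw huw, fun hw => ?_⟩⟩
  by_contra hu
  exact hu (subset_evenAltReach (hmax.2 (not_hasOddAltWalk_insert hG hmax.prop huw hle hw)
    (Set.subset_insert u Z) (Set.mem_insert u Z)))

theorem exists_path_of_hasOddAltWalk (hG : G.IsAcyclic) (h : HasOddAltWalk G le Z) :
    ∃ (k : ℕ) (f : ℕ → V), Odd k ∧ (∀ i < k, G.Adj (f i) (f (i + 1))) ∧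
      (∀ i ≤ k, ∀ j ≤ k, f i = f j → i = j) ∧ f 0 ∈ Z ∧ f k ∈ Z ∧
      ∀ i, 0 < i → i ≤ k → Even i → le s(f (i - 1), f i) = false := by
  obtain ⟨a, ha, b, hb, p, hodd, hp⟩ := h
  obtain ⟨q, hq, hq_alt, hlen⟩ := exists_isPath_zeroAtOdd hG p hp
  refine ⟨q.length, q.getVert, by rw [Nat.odd_iff] at hodd ⊢; omega,
    fun i hi => q.adj_getVert_succ hi, fun i hi j hj hij => hq.getVert_injOn hi hj hij,
    by simpa using ha, by simpa using hb, fun i hi₀ hik heven => ?_⟩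
  have := hq_alt (i - 1) (by rw [Walk.length_edges]; omega) (by rw [Nat.even_iff] at heven; rw [Nat.odd_iff]; omega)
  rwa [getElem_edges_eq_getVert, Nat.sub_add_cancel hi₀] at this

lemma mem_of_even_of_alternating {I : Set V} (hind : ∀ u ∈ I, ∀ w ∈ I, ¬G.Adj u w)
    (hedge : ∀ u w, G.Adj u w → le s(u, w) = false → (u ∈ I ↔ w ∉ I)) {f : ℕ → V} {k : ℕ}
    (hadj : ∀ i < k, G.Adj (f i) (f (i + 1)))
    (hle : ∀ i, 0 < i → i ≤ k → Even i → le s(f (i - 1), f i) = false) (h₀ : f 0 ∈ I) :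
    ∀ j, 2 * j ≤ k → f (2 * j) ∈ I := by
  intro j
  induction j with
  | zero => simpa using h₀
  | succ j ih =>
    intro hj
    have hodd : f (2 * j + 1) ∉ I := fun h =>
      hind _ (ih (by omega)) _ h (hadj (2 * j) (by omega))
    have hzero : le s(f (2 * j + 1), f (2 * (j + 1))) = false :=
      hle (2 * (j + 1)) (by omega) hj (even_two_mul _)
    exact not_not.mp (mt (hedge _ _ (hadj (2 * j + 1) (by omega)) hzero).mpr hodd)

end Graph
end LabelledForest

/-- There is no independent set `I` of vertices in a forest `D` (with
0/1-labelled vertices and edges) such that `I` contains all vertices labelled 0 and every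
edge labelled 0 has exactly one endpoint in `I`, if and only if `D` contains a (simple)
path `e₀, e₁, …, e_k` of odd length `k` such that `e₀` and `e_k` are labelled 0 and every
edge `{e_{i−1}, e_i}` with even `i` is labelled 0. -/
theorem stmt_19 {V : Type*} [Fintype V] (G : SimpleGraph V) (hG : G.IsAcyclic)
    (lv : V → Bool) (le : Sym2 V → Bool) :
    (¬ ∃ I : Set V,
        (∀ v : V, lv v = false → v ∈ I) ∧
        (∀ u ∈ I, ∀ w ∈ I, ¬ G.Adj u w) ∧
        (∀ u w : V, G.Adj u w → le s(u, w) = false → (u ∈ I ↔ w ∉ I))) ↔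
    (∃ (k : ℕ) (f : ℕ → V), Odd k ∧
        (∀ i < k, G.Adj (f i) (f (i + 1))) ∧
        (∀ i ≤ k, ∀ j ≤ k, f i = f j → i = j) ∧
        lv (f 0) = false ∧ lv (f k) = false ∧
        (∀ i, 0 < i → i ≤ k → Even i → le s(f (i - 1), f i) = false)) := by
  constructor
  · intro hno
    by_contra hpath
    have hZ₀ : ¬LabelledForest.HasOddAltWalk G le {v | lv v = false} := fun h =>
      hpath (LabelledForest.exists_path_of_hasOddAltWalk hG h)
    obtain ⟨I, hZ, hind, hedge⟩ :=
      LabelledForest.exists_independent_superset_of_not_hasOddAltWalk hG hZ₀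
    exact hno ⟨I, fun v hv => hZ hv, hind, hedge⟩
  · rintro ⟨k, f, ⟨j, rfl⟩, hadj, -, h₀, hk, hle⟩ ⟨I, hZ, hind, hedge⟩
    have heven : f (2 * j) ∈ I :=
      LabelledForest.mem_of_even_of_alternating hind hedge hadj hle (hZ _ h₀) j (by omega)
    exact hind _ heven _ (hZ _ hk) (hadj (2 * j) (by omega))
end
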